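/- arXiv:quant-ph/0412070 — 3 statements merged into one kernel-verified Lean document; each statement's English description precedes it below -/
import Mathlib

section
/- For every e ∈ 𝔽₂ⁿ, the number of subspaces C₂⊥ ∈ A_m with e ∈ 𝓔(C₂⊥) is at most |A_m| · |{ ê ∈ 𝔽₂ⁿ : H_c(ê) ≤ H_c(e) }| · 2^{−n(1−R)}. -/
open Real Set

/-- Binary entropy function (base 2), with `0 * log 0 = 0`. -/
noncomputable def binH (x : ℝ) : ℝ := -(x * Real.logb 2 x) - (1 - x) * Real.logb 2 (1 - x)

/-- Binary Kullback–Leibler divergence (base 2). -/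
noncomputable def binD (q p : ℝ) : ℝ :=
  q * Real.logb 2 (q / p) + (1 - q) * Real.logb 2 ((1 - q) / (1 - p))

/-- The error exponent `E(R,p₀,p₁)`:
`min_{q₀,q₁ ∈ [0,1]} [(D(q₁‖p₁)+D(q₀‖p₀))/2 + |1 − R − (H(q₀)+H(q₁))/2|⁺]`. -/
noncomputable def Eexp (R p0 p1 : ℝ) : ℝ :=
  sInf {v : ℝ | ∃ q0 ∈ Set.Icc (0:ℝ) 1, ∃ q1 ∈ Set.Icc (0:ℝ) 1,
    v = (binD q1 p1 + binD q0 p0) / 2 + max (1 - R - (binH q0 + binH q1) / 2) 0}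

/-- Binary vectors of length `n = k + k` (so `k = n/2` and `n` is even). -/
abbrev Vec (k : ℕ) := Fin (k + k) → ZMod 2

/-- First half `e⁽¹⁾` of `e ∈ 𝔽₂ⁿ`. -/
def firstHalf {k : ℕ} (e : Vec k) : Fin k → ZMod 2 := fun i => e (Fin.castAdd k i)

/-- Second half `e⁽²⁾` of `e ∈ 𝔽₂ⁿ`. -/
def secondHalf {k : ℕ} (e : Vec k) : Fin k → ZMod 2 := fun i => e (Fin.natAdd k i)

/-- Hamming weight `w(x)`. -/
def wt {k : ℕ} (x : Fin k → ZMod 2) : ℕ := hammingNorm x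

/-- The type of a half: its relative Hamming weight `w(x)/(n/2)`. -/
noncomputable def typeOf {k : ℕ} (x : Fin k → ZMod 2) : ℝ := (wt x : ℝ) / k

/-- The conditional entropy `H_c(e) = (H(type e⁽¹⁾) + H(type e⁽²⁾))/2`. -/
noncomputable def Hc {k : ℕ} (e : Vec k) : ℝ :=
  (binH (typeOf (firstHalf e)) + binH (typeOf (secondHalf e))) / 2

/-- The set `A_m`: linear subspaces of dimension `s = r + m` containing `C₁⊥`. -/
def Am {k : ℕ} (C1perp : Submodule (ZMod 2) (Vec k)) (s : ℕ) :
    Set (Submodule (ZMod 2) (Vec k)) :=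
  {C | Module.finrank (ZMod 2) C = s ∧ C1perp ≤ C}

/-- Uncorrectable errors `𝓔(C₂⊥)` under minimum conditional entropy decoding. -/
def errSet {k : ℕ} (C1perp C2perp : Submodule (ZMod 2) (Vec k)) : Set (Vec k) :=
  {e | ∃ ehat : Vec k, Hc ehat ≤ Hc e ∧
    e + ehat ∈ (C2perp : Set (Vec k)) \ (C1perp : Set (Vec k))}

/-- BSC probability `Q_{p₁′,p₀′}(e)`: crossover `p1'` on the first half and
`p0'` on the second half. -/
noncomputable def bscProb {k : ℕ} (p1' p0' : ℝ) (e : Vec k) : ℝ :=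
  p1' ^ wt (firstHalf e) * (1 - p1') ^ (k - wt (firstHalf e)) *
    (p0' ^ wt (secondHalf e) * (1 - p0') ^ (k - wt (secondHalf e)))

open Classical in
/-- Decoding error probability `P_err(C₂⊥, p₀′, p₁′)` of `C₂⊥` as part of a CSS code. -/
noncomputable def Perr {k : ℕ} (C1perp C2perp : Submodule (ZMod 2) (Vec k))
    (p0' p1' : ℝ) : ℝ :=
  ∑ e : Vec k, if e ∈ errSet C1perp C2perp then bscProb p1' p0' e else 0

/-- The type class `T_{(a,b)}^n`. -/
def typeClass {k : ℕ} (a b : ℝ) : Set (Vec k) :=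
  {e | typeOf (firstHalf e) = a ∧ typeOf (secondHalf e) = b}


section AuxStmt6

open Module Submodule

/-- GL acts transitively on nonzero vectors of a vector space. -/
lemma aux_exists_equiv {K V : Type*} [Field K] [AddCommGroup V] [Module K V]
    {x y : V} (hx : x ≠ 0) (hy : y ≠ 0) : ∃ φ : V ≃ₗ[K] V, φ x = y := by
  classical
  have hlx := LinearIndepOn.singleton (R := K) (v := (id : V → V)) hx
  have hly := LinearIndepOn.singleton (R := K) (v := (id : V → V)) hy
  let bx := Basis.extend hlx
  let byy := Basis.extend hly
  let ix : hlx.extend (Set.subset_univ _) := ⟨x, hlx.subset_extend _ rfl⟩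
  let iy : hly.extend (Set.subset_univ _) := ⟨y, hly.subset_extend _ rfl⟩
  let f := (bx.indexEquiv byy).trans (Equiv.swap ((bx.indexEquiv byy) ix) iy)
  refine ⟨bx.equiv byy f, ?_⟩
  have hx' : bx ix = x := Basis.extend_apply_self _ _
  have hy' : byy iy = y := Basis.extend_apply_self _ _
  calc (bx.equiv byy f) x = (bx.equiv byy f) (bx ix) := by rw [hx']
    _ = byy (f ix) := by rw [Basis.equiv_apply]
    _ = y := by simp only [f, Equiv.trans_apply, Equiv.swap_apply_left]; exact hy'

lemma aux_count_eq {K Q : Type*} [Field K] [AddCommGroup Q] [Module K Q]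
    (m : ℕ) {u u' : Q} (hu : u ≠ 0) (hu' : u' ≠ 0) :
    {W : Submodule K Q | finrank K W = m ∧ u ∈ W}.ncard
      = {W : Submodule K Q | finrank K W = m ∧ u' ∈ W}.ncard := by
  obtain ⟨φ, hφ⟩ := aux_exists_equiv (K := K) hu hu'
  have hinj : Function.Injective (Submodule.map (φ : Q →ₗ[K] Q)) :=
    Submodule.map_injective_of_injective φ.injective
  have himg : Submodule.map (φ : Q →ₗ[K] Q) '' {W : Submodule K Q | finrank K W = m ∧ u ∈ W}
      = {W : Submodule K Q | finrank K W = m ∧ u' ∈ W} := by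
    ext W'
    simp only [Set.mem_image, Set.mem_setOf_eq]
    constructor
    · rintro ⟨W, ⟨h1, h2⟩, rfl⟩
      refine ⟨by rw [LinearEquiv.finrank_map_eq]; exact h1, ?_⟩
      exact hφ ▸ Submodule.mem_map_of_mem h2
    · rintro ⟨h1, h2⟩
      refine ⟨Submodule.comap (φ : Q →ₗ[K] Q) W', ⟨?_, ?_⟩,
        Submodule.map_comap_eq_of_surjective φ.surjective _⟩
      · rw [Submodule.comap_equiv_eq_map_symm, LinearEquiv.finrank_map_eq]; exact h1
      · simp only [Submodule.mem_comap, LinearEquiv.coe_coe, hφ]; exact h2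
  calc {W : Submodule K Q | finrank K W = m ∧ u ∈ W}.ncard
      = (Submodule.map (φ : Q →ₗ[K] Q) '' {W : Submodule K Q | finrank K W = m ∧ u ∈ W}).ncard :=
        (Set.ncard_image_of_injective _ hinj).symm
    _ = _ := by rw [himg]

lemma aux_double_count {K Q : Type*} [Field K] [Fintype K] [AddCommGroup Q] [Module K Q]
    [Fintype Q] (m : ℕ) {u : Q} (hu : u ≠ 0) :
    {W : Submodule K Q | finrank K W = m ∧ u ∈ W}.ncard * (Fintype.card Q - 1)
      = {W : Submodule K Q | finrank K W = m}.ncard * (Fintype.card K ^ m - 1) := by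
  classical
  haveI : Finite (Submodule K Q) :=
    Finite.of_injective (fun W : Submodule K Q => (W : Set Q)) SetLike.coe_injective
  haveI : Fintype (Submodule K Q) := Fintype.ofFinite _
  set T : Finset (Submodule K Q) := Finset.univ.filter (fun W => finrank K W = m) with hT
  have hncT : {W : Submodule K Q | finrank K W = m}.ncard = T.card := by
    rw [Set.ncard_eq_toFinset_card']
    congr 1; ext W; simp [hT]
  have hncN : ∀ w : Q, {W : Submodule K Q | finrank K W = m ∧ w ∈ W}.ncard
      = (T.filter (fun W => w ∈ W)).card := by
    intro w
    rw [Set.ncard_eq_toFinset_card']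
    congr 1; ext W; simp [hT]
  have key : ∑ W ∈ T, ∑ w ∈ Finset.univ.erase (0:Q), (if w ∈ W then 1 else 0)
      = ∑ w ∈ Finset.univ.erase (0:Q), ∑ W ∈ T, (if w ∈ W then 1 else 0) :=
    Finset.sum_comm
  have hL : ∀ W ∈ T, ∑ w ∈ Finset.univ.erase (0:Q), (if w ∈ W then 1 else 0)
      = Fintype.card K ^ m - 1 := by
    intro W hW
    rw [Finset.sum_boole]
    rw [Finset.filter_erase, Finset.card_erase_of_mem
      (Finset.mem_filter.mpr ⟨Finset.mem_univ _, W.zero_mem⟩)]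
    have h1 : (Finset.univ.filter (fun w : Q => w ∈ W)).card = Fintype.card W :=
      (Fintype.card_subtype _).symm
    rw [h1, card_eq_pow_finrank (K := K) (V := W)]
    rw [Finset.mem_filter] at hW
    rw [hW.2]
    exact Nat.cast_id _
  have hR : ∀ w ∈ Finset.univ.erase (0:Q), ∑ W ∈ T, (if w ∈ W then 1 else 0)
      = (T.filter (fun W => u ∈ W)).card := by
    intro w hw
    rw [Finset.sum_boole]
    have hw0 : w ≠ 0 := Finset.ne_of_mem_erase hw
    have := aux_count_eq (K := K) m hw0 hu
    rw [hncN w, hncN u] at this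
    exact_mod_cast this
  have keyL : ∑ W ∈ T, ∑ w ∈ Finset.univ.erase (0:Q), (if w ∈ W then 1 else 0)
      = T.card * (Fintype.card K ^ m - 1) := by
    rw [Finset.sum_congr rfl hL, Finset.sum_const, smul_eq_mul]
  have keyR : ∑ w ∈ Finset.univ.erase (0:Q), ∑ W ∈ T, (if w ∈ W then 1 else 0)
      = (Fintype.card Q - 1) * (T.filter (fun W => u ∈ W)).card := by
    rw [Finset.sum_congr rfl hR, Finset.sum_const, smul_eq_mul,
      Finset.card_erase_of_mem (Finset.mem_univ _), Finset.card_univ]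
  have h := keyL.symm.trans (key.trans keyR)
  rw [hncN u, hncT]
  exact (mul_comm _ _).trans h.symm

lemma aux_finrank_comap {K V : Type*} [Field K] [AddCommGroup V] [Module K V]
    [FiniteDimensional K V] (p : Submodule K V) (W : Submodule K (V ⧸ p)) :
    finrank K (W.comap p.mkQ) = finrank K W + finrank K p := by
  set C := W.comap p.mkQ with hC
  have hpC : p ≤ C := Submodule.le_comap_mkQ p W
  let f : C →ₗ[K] V ⧸ p := (p.mkQ).domRestrict C
  have h1 : LinearMap.range f = W := by
    rw [LinearMap.range_domRestrict]
    exact Submodule.map_comap_eq_of_surjective (p.mkQ_surjective) W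
  have h2 : LinearMap.ker f = Submodule.comap C.subtype p := by
    ext x
    simp [f, LinearMap.mem_ker, Submodule.mem_comap, LinearMap.domRestrict_apply,
      Submodule.Quotient.mk_eq_zero]
  have h3 := LinearMap.finrank_range_add_finrank_ker f
  rw [h1, h2] at h3
  have h4 := (Submodule.comapSubtypeEquivOfLe hpC).finrank_eq
  omega

lemma aux_ncard_biUnion_le {α β : Type*} [Finite β] (s : Finset α) (f : α → Set β) :
    (⋃ a ∈ s, f a).ncard ≤ ∑ a ∈ s, (f a).ncard := by
  classical
  induction s using Finset.induction with
  | empty => simp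
  | @insert x s hx ih =>
      rw [Finset.sum_insert hx, Finset.set_biUnion_insert]
      exact (Set.ncard_union_le _ _).trans (Nat.add_le_add_left ih _)

lemma aux_bridge {k r m : ℕ} (p : Submodule (ZMod 2) (Vec k))
    (hr : Module.finrank (ZMod 2) p = r) {v : Vec k} (hv : v ∉ p) :
    {C | C ∈ Am p (r + m) ∧ v ∈ C}.ncard * 2 ^ (k + k)
      ≤ (Am p (r + m)).ncard * 2 ^ (r + m) := by
  classical
  haveI : Finite (Vec k ⧸ p) := Finite.of_surjective p.mkQ p.mkQ_surjective
  haveI : Fintype (Vec k ⧸ p) := Fintype.ofFinite _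
  have hu : p.mkQ v ≠ 0 := by
    rw [Ne, Submodule.mkQ_apply, Submodule.Quotient.mk_eq_zero]
    exact hv
  have hinj : Function.Injective (fun W : Submodule (ZMod 2) (Vec k ⧸ p) => W.comap p.mkQ) := by
    intro W W' h
    have := congrArg (Submodule.map p.mkQ) h
    simpa [Submodule.map_comap_eq_of_surjective (p.mkQ_surjective)] using this
  have hVfin : finrank (ZMod 2) (Vec k) = k + k := by
    rw [Module.finrank_fintype_fun_eq_card, Fintype.card_fin]
  have hrle : r ≤ k + k := by
    have h5 := p.finrank_le
    omega
  have hdr : finrank (ZMod 2) (Vec k ⧸ p) + r = k + k := by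
    have := Submodule.finrank_quotient_add_finrank p
    rw [hr, hVfin] at this
    exact this
  have himg1 : (fun W : Submodule (ZMod 2) (Vec k ⧸ p) => W.comap p.mkQ) ''
      {W : Submodule (ZMod 2) (Vec k ⧸ p) | finrank (ZMod 2) W = m} = Am p (r + m) := by
    ext C
    simp only [Set.mem_image, Set.mem_setOf_eq, Am]
    constructor
    · rintro ⟨W, hW, rfl⟩
      refine ⟨?_, Submodule.le_comap_mkQ p W⟩
      rw [aux_finrank_comap, hW, hr]; omega
    · rintro ⟨hC, hpC⟩
      refine ⟨Submodule.map p.mkQ C, ?_, ?_⟩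
      · have h := aux_finrank_comap p (Submodule.map p.mkQ C)
        rw [Submodule.comap_map_mkQ, sup_eq_right.mpr hpC, hC, hr] at h
        omega
      · rw [Submodule.comap_map_mkQ, sup_eq_right.mpr hpC]
  have himg2 : (fun W : Submodule (ZMod 2) (Vec k ⧸ p) => W.comap p.mkQ) ''
      {W : Submodule (ZMod 2) (Vec k ⧸ p) | finrank (ZMod 2) W = m ∧ p.mkQ v ∈ W} = {C | C ∈ Am p (r + m) ∧ v ∈ C} := by
    ext C
    simp only [Set.mem_image, Set.mem_setOf_eq, Am]
    constructor
    · rintro ⟨W, ⟨hW, huW⟩, rfl⟩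
      refine ⟨⟨?_, Submodule.le_comap_mkQ p W⟩, ?_⟩
      · rw [aux_finrank_comap, hW, hr]; omega
      · exact huW
    · rintro ⟨⟨hC, hpC⟩, hvC⟩
      refine ⟨Submodule.map p.mkQ C, ⟨?_, ?_⟩, ?_⟩
      · have h := aux_finrank_comap p (Submodule.map p.mkQ C)
        rw [Submodule.comap_map_mkQ, sup_eq_right.mpr hpC, hC, hr] at h
        omega
      · exact Submodule.mem_map_of_mem hvC
      · rw [Submodule.comap_map_mkQ, sup_eq_right.mpr hpC]
  have hncT : {W : Submodule (ZMod 2) (Vec k ⧸ p) | finrank (ZMod 2) W = m}.ncard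
      = (Am p (r + m)).ncard := by
    rw [← himg1, Set.ncard_image_of_injective _ hinj]
  have hncN : {W : Submodule (ZMod 2) (Vec k ⧸ p) | finrank (ZMod 2) W = m ∧ p.mkQ v ∈ W}.ncard
      = {C | C ∈ Am p (r + m) ∧ v ∈ C}.ncard := by
    rw [← himg2, Set.ncard_image_of_injective _ hinj]
  have hdc := aux_double_count (K := ZMod 2) (Q := Vec k ⧸ p) m hu
  rw [ZMod.card] at hdc
  have hcardQ : Fintype.card (Vec k ⧸ p) = 2 ^ (k + k - r) := by
    rw [card_eq_pow_finrank (K := ZMod 2) (V := Vec k ⧸ p), ZMod.card]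
    congr 1
    omega
  rw [hcardQ, hncT, hncN] at hdc
  set N := {C | C ∈ Am p (r + m) ∧ v ∈ C}.ncard
  set T := (Am p (r + m)).ncard with hTdef
  have hNT : N ≤ T := by
    apply Set.ncard_le_ncard
    · intro C hC; exact hC.1
    · haveI : Finite (Submodule (ZMod 2) (Vec k)) :=
        Finite.of_injective (fun W : Submodule (ZMod 2) (Vec k) => (W : Set (Vec k)))
          SetLike.coe_injective
      exact Set.toFinite _
  -- N * 2^(k+k-r) ≤ T * 2^m
  have h2m : 1 ≤ 2 ^ m := Nat.one_le_two_pow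
  have h2d : 1 ≤ 2 ^ (k + k - r) := Nat.one_le_two_pow
  have e1 : ∀ (a x : ℕ), 1 ≤ x → a * x = a * (x - 1) + a := by
    intro a x hx
    cases' Nat.exists_eq_add_of_le hx with c hc
    subst hc
    rw [Nat.add_sub_cancel_left]
    ring
  have step : N * 2 ^ (k + k - r) ≤ T * 2 ^ m := by
    calc N * 2 ^ (k + k - r) = T * (2 ^ m - 1) + N := by rw [e1 N _ h2d, hdc]
      _ ≤ T * (2 ^ m - 1) + T := by omega
      _ = T * 2 ^ m := (e1 T _ h2m).symm
  calc N * 2 ^ (k + k) = N * 2 ^ (k + k - r) * 2 ^ r := by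
        rw [mul_assoc, ← pow_add]
        congr 2
        omega
    _ ≤ T * 2 ^ m * 2 ^ r := Nat.mul_le_mul_right _ step
    _ = T * 2 ^ (r + m) := by rw [mul_assoc, ← pow_add, Nat.add_comm m r]

end AuxStmt6

/-- for every `e ∈ 𝔽₂ⁿ`, the number of `C₂⊥ ∈ A_m` with `e ∈ 𝓔(C₂⊥)`
is at most `|A_m| · |{ê : H_c(ê) ≤ H_c(e)}| · 2^{−n(1−R)}`. -/

theorem stmt6 {k r m : ℕ} (hk : 0 < k) (C1perp : Submodule (ZMod 2) (Vec k))
    (hr : Module.finrank (ZMod 2) C1perp = r) (hm : 1 ≤ m) (hrm : r + m ≤ k + k)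
    (R : ℝ) (hR : R = ((r : ℝ) + m) / ((k : ℝ) + k)) (e : Vec k) :
    (({C ∈ Am C1perp (r + m) | e ∈ errSet C1perp C}).ncard : ℝ) ≤
      ((Am C1perp (r + m)).ncard : ℝ) *
        (({ehat : Vec k | Hc ehat ≤ Hc e}).ncard : ℝ) *
        (2 : ℝ) ^ (-(((k : ℝ) + k) * (1 - R))) := by
  classical
  haveI : Finite (Submodule (ZMod 2) (Vec k)) :=
    Finite.of_injective (fun W : Submodule (ZMod 2) (Vec k) => (W : Set (Vec k)))
      SetLike.coe_injective
  set B : Set (Vec k) := {ehat | Hc ehat ≤ Hc e} with hB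
  set T : ℕ := (Am C1perp (r + m)).ncard with hT
  set g : Vec k → Set (Submodule (ZMod 2) (Vec k)) :=
    fun eh => {C | C ∈ Am C1perp (r + m) ∧ (e + eh) ∈ C ∧ e + eh ∉ C1perp} with hg
  have hsub : {C ∈ Am C1perp (r + m) | e ∈ errSet C1perp C} ⊆ ⋃ eh ∈ B.toFinset, g eh := by
    rintro C ⟨hCA, ehat, hHc, hmem⟩
    simp only [Set.mem_iUnion, exists_prop]
    exact ⟨ehat, Set.mem_toFinset.mpr hHc, hCA, hmem.1, hmem.2⟩
  have hstep1 : ({C ∈ Am C1perp (r + m) | e ∈ errSet C1perp C}).ncard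
      ≤ ∑ eh ∈ B.toFinset, (g eh).ncard :=
    le_trans (Set.ncard_le_ncard hsub (Set.toFinite _)) (aux_ncard_biUnion_le _ _)
  have hnpos : (0:ℝ) < 2 ^ (k + k) := by positivity
  have hterm : ∀ eh : Vec k, ((g eh).ncard : ℝ) ≤ (T : ℝ) * 2 ^ (r + m) / 2 ^ (k + k) := by
    intro eh
    by_cases hin : e + eh ∈ C1perp
    · have : g eh = ∅ := by
        ext C; simp only [hg, Set.mem_setOf_eq, Set.mem_empty_iff_false, iff_false]
        rintro ⟨-, -, habs⟩; exact habs hin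
      rw [this]
      simp only [Set.ncard_empty, Nat.cast_zero]
      positivity
    · have hb := aux_bridge (m := m) C1perp hr hin
      have hsub2 : (g eh).ncard ≤ {C | C ∈ Am C1perp (r + m) ∧ (e + eh) ∈ C}.ncard :=
        Set.ncard_le_ncard (fun C hC => ⟨hC.1, hC.2.1⟩) (Set.toFinite _)
      have hnat : (g eh).ncard * 2 ^ (k + k) ≤ T * 2 ^ (r + m) :=
        le_trans (Nat.mul_le_mul_right _ hsub2) hb
      rw [le_div_iff₀ hnpos]
      calc ((g eh).ncard : ℝ) * 2 ^ (k + k) = (((g eh).ncard * 2 ^ (k + k) : ℕ) : ℝ) := by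
            push_cast; ring
        _ ≤ ((T * 2 ^ (r + m) : ℕ) : ℝ) := by exact_mod_cast hnat
        _ = (T : ℝ) * 2 ^ (r + m) := by push_cast; ring
  have hstep2 : (({C ∈ Am C1perp (r + m) | e ∈ errSet C1perp C}).ncard : ℝ)
      ≤ (B.toFinset.card : ℝ) * ((T : ℝ) * 2 ^ (r + m) / 2 ^ (k + k)) := by
    calc (({C ∈ Am C1perp (r + m) | e ∈ errSet C1perp C}).ncard : ℝ)
        ≤ ((∑ eh ∈ B.toFinset, (g eh).ncard : ℕ) : ℝ) := by exact_mod_cast hstep1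
      _ = ∑ eh ∈ B.toFinset, ((g eh).ncard : ℝ) := by push_cast; ring
      _ ≤ ∑ eh ∈ B.toFinset, ((T : ℝ) * 2 ^ (r + m) / 2 ^ (k + k)) :=
          Finset.sum_le_sum fun eh _ => hterm eh
      _ = (B.toFinset.card : ℝ) * ((T : ℝ) * 2 ^ (r + m) / 2 ^ (k + k)) := by
          rw [Finset.sum_const, nsmul_eq_mul]
  have hBcard : (B.ncard : ℝ) = (B.toFinset.card : ℝ) := by
    rw [Set.ncard_eq_toFinset_card']
  have hkk : ((k : ℝ) + k) ≠ 0 := by positivity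
  have hexp : -(((k : ℝ) + k) * (1 - R)) = ((r + m : ℕ) : ℝ) - ((k + k : ℕ) : ℝ) := by
    rw [hR]
    push_cast
    field_simp
    ring
  have hrpow : (2 : ℝ) ^ (-(((k : ℝ) + k) * (1 - R)))
      = 2 ^ (r + m) / 2 ^ (k + k) := by
    rw [hexp, Real.rpow_sub (by norm_num : (0:ℝ) < 2), Real.rpow_natCast, Real.rpow_natCast]
  rw [hrpow, hBcard]
  calc (({C ∈ Am C1perp (r + m) | e ∈ errSet C1perp C}).ncard : ℝ)
      ≤ (B.toFinset.card : ℝ) * ((T : ℝ) * 2 ^ (r + m) / 2 ^ (k + k)) := hstep2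
    _ = (T : ℝ) * (B.toFinset.card : ℝ) * ((2:ℝ) ^ (r + m) / 2 ^ (k + k)) := by ring
end

section
/- For every type pair (a,b) with a, b ∈ {0, 2/n, 4/n, …, 1}, the average over C₂⊥ ∈ A_m of the ratio |𝓔(C₂⊥) ∩ T_{(a,b)}^n| / |T_{(a,b)}^n| satisfies (1/|A_m|) Σ_{C₂⊥ ∈ A_m} |𝓔(C₂⊥) ∩ T_{(a,b)}^n| / |T_{(a,b)}^n| ≤ (n/2+1)² · 2^{−n·|1 − R − H_c(a,b)|⁺}. -/
open Real Set

open Module Submodule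

/-- number of `j`-dimensional subspaces of `𝔽₂^d` -/
noncomputable def gcount (d j : ℕ) : ℕ :=
  Nat.card {D : Submodule (ZMod 2) (Fin d → ZMod 2) // Module.finrank (ZMod 2) D = j}

section
variable {V : Type*} [AddCommGroup V] [Module (ZMod 2) V]

lemma countA (d j : ℕ) [FiniteDimensional (ZMod 2) V] (hd : finrank (ZMod 2) V = d) :
    Nat.card {D : Submodule (ZMod 2) V // finrank (ZMod 2) D = j} = gcount d j := by
  obtain ⟨e⟩ := FiniteDimensional.nonempty_linearEquiv_of_finrank_eq
      (show finrank (ZMod 2) V = finrank (ZMod 2) (Fin d → ZMod 2) by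
        rw [hd, Module.finrank_fin_fun])
  exact Nat.card_congr (Equiv.subtypeEquiv (Submodule.orderIsoMapComap e).toEquiv
    (fun D => by
      have : (Submodule.orderIsoMapComap e).toEquiv D
          = Submodule.map (e : V →ₗ[ZMod 2] (Fin d → ZMod 2)) D := rfl
      rw [this, LinearEquiv.finrank_map_eq]))

lemma rank_map_mkQ [FiniteDimensional (ZMod 2) V] {p C : Submodule (ZMod 2) V} (h : p ≤ C) :
    finrank (ZMod 2) (map p.mkQ C) + finrank (ZMod 2) p = finrank (ZMod 2) C := by
  have hf := LinearMap.finrank_range_add_finrank_ker (p.mkQ.comp C.subtype)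
  rw [LinearMap.range_comp, Submodule.range_subtype, LinearMap.ker_comp, Submodule.ker_mkQ] at hf
  rwa [(Submodule.comapSubtypeEquivOfLe h).finrank_eq] at hf

lemma countB [FiniteDimensional (ZMod 2) V] (p : Submodule (ZMod 2) V) {w s : ℕ}
    (hw : finrank (ZMod 2) p = w) (hws : w ≤ s) :
    Nat.card {C : Submodule (ZMod 2) V // finrank (ZMod 2) C = s ∧ p ≤ C}
      = Nat.card {D : Submodule (ZMod 2) (V ⧸ p) // finrank (ZMod 2) D = s - w} := by
  apply Nat.card_congr
  have hmc : ∀ C : Submodule (ZMod 2) V, p ≤ C → comap p.mkQ (map p.mkQ C) = C := by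
    intro C hC
    rw [Submodule.comap_map_eq, Submodule.ker_mkQ, sup_eq_left.2 hC]
  have hcm : ∀ D : Submodule (ZMod 2) (V ⧸ p), map p.mkQ (comap p.mkQ D) = D := by
    intro D
    rw [Submodule.map_comap_eq, Submodule.range_mkQ, top_inf_eq]
  have hle : ∀ D : Submodule (ZMod 2) (V ⧸ p), p ≤ comap p.mkQ D := by
    intro D
    have := LinearMap.ker_le_comap (p := D) p.mkQ
    rwa [Submodule.ker_mkQ] at this
  refine ⟨fun C => ⟨map p.mkQ C.1, ?_⟩, fun D => ⟨comap p.mkQ D.1, ?_, hle D.1⟩, ?_, ?_⟩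
  · have := rank_map_mkQ C.2.2
    rw [hw, C.2.1] at this
    omega
  · have := rank_map_mkQ (hle D.1)
    rw [hw, hcm D.1, D.2] at this
    omega
  · intro C
    exact Subtype.ext (hmc C.1 C.2.2)
  · intro D
    exact Subtype.ext (hcm D.1)

end

instance finiteSubmodule {V : Type*} [AddCommGroup V] [Module (ZMod 2) V] [Finite V] :
    Finite (Submodule (ZMod 2) V) :=
  Finite.of_injective (fun C => (C : Set V)) SetLike.coe_injective

lemma natCard_submodule {V : Type*} [AddCommGroup V] [Module (ZMod 2) V] [Finite V]
    (D : Submodule (ZMod 2) V) : Nat.card D = 2 ^ finrank (ZMod 2) D := by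
  cases nonempty_fintype V
  letI : Fintype D := Fintype.ofFinite _
  have := card_eq_pow_finrank (K := ZMod 2) (V := D)
  rw [ZMod.card 2] at this
  rw [← this, Nat.card_eq_fintype_card]

lemma countDC {d j : ℕ} (hj : 1 ≤ j) (hjd : j ≤ d) :
    gcount d j * (2 ^ j - 1) = (2 ^ d - 1) * gcount (d - 1) (j - 1) := by
  classical
  letI : Fintype (Submodule (ZMod 2) (Fin d → ZMod 2)) := Fintype.ofFinite _
  set X := Fin d → ZMod 2 with hX
  let S : Finset (Submodule (ZMod 2) X) :=
    Finset.univ.filter (fun D => finrank (ZMod 2) D = j)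
  have hgS : gcount d j = S.card := by
    rw [gcount, Nat.card_eq_fintype_card, Fintype.card_subtype]
  have hcardD : ∀ D ∈ S, (Finset.univ.filter (fun x : X => x ∈ D ∧ x ≠ 0)).card = 2 ^ j - 1 := by
    intro D hD
    have hDj : finrank (ZMod 2) D = j := (Finset.mem_filter.1 hD).2
    have h1 : Finset.univ.filter (fun x : X => x ∈ D ∧ x ≠ 0)
        = (Finset.univ.filter (fun x : X => x ∈ D)).erase 0 := by
      ext x; simp [Finset.mem_erase, and_comm]
    have h2 : (Finset.univ.filter (fun x : X => x ∈ D)).card = 2 ^ j := by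
      rw [← Fintype.card_subtype]
      rw [Fintype.card_eq_nat_card]
      rw [← hDj, ← natCard_submodule D]
    rw [h1, Finset.card_erase_of_mem (by simp [D.zero_mem]), h2]
  have hcardx : ∀ x : X, x ≠ 0 → (S.filter (fun D => x ∈ D)).card = gcount (d - 1) (j - 1) := by
    intro x hx
    have h1 : (S.filter (fun D => x ∈ D)).card
        = Nat.card {D : Submodule (ZMod 2) X // finrank (ZMod 2) D = j ∧ x ∈ D} := by
      rw [Nat.card_eq_fintype_card, Fintype.card_subtype, Finset.filter_filter]
    rw [h1]
    have h2 : ∀ D : Submodule (ZMod 2) X, (x ∈ D) = (Submodule.span (ZMod 2) {x} ≤ D) := by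
      intro D; rw [eq_iff_iff, Submodule.span_singleton_le_iff_mem]
    simp only [h2]
    rw [countB (Submodule.span (ZMod 2) {x}) (finrank_span_singleton hx) hj]
    have hq : finrank (ZMod 2) (X ⧸ Submodule.span (ZMod 2) {x}) = d - 1 := by
      have := Submodule.finrank_quotient_add_finrank (Submodule.span (ZMod 2) {x})
      rw [finrank_span_singleton hx, Module.finrank_fin_fun] at this
      omega
    rw [countA (d - 1) (j - 1) hq, gcount]
  have hcardne : (Finset.univ.filter (fun x : X => x ≠ 0)).card = 2 ^ d - 1 := by
    have h1 : Finset.univ.filter (fun x : X => x ≠ 0) = Finset.univ.erase 0 := by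
      ext x; simp [Finset.mem_erase]
    rw [h1, Finset.card_erase_of_mem (Finset.mem_univ _), Finset.card_univ]
    congr 1
    rw [Fintype.card_fun, ZMod.card 2, Fintype.card_fin]
  calc gcount d j * (2 ^ j - 1) = ∑ D ∈ S, (2 ^ j - 1) := by
        rw [Finset.sum_const, hgS, smul_eq_mul, mul_comm]
    _ = ∑ D ∈ S, ∑ x : X, (if x ∈ D ∧ x ≠ 0 then 1 else 0) := by
        refine Finset.sum_congr rfl fun D hD => ?_
        rw [← hcardD D hD, Finset.card_filter]
    _ = ∑ x : X, ∑ D ∈ S, (if x ∈ D ∧ x ≠ 0 then 1 else 0) := Finset.sum_comm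
    _ = ∑ x : X, (if x ≠ 0 then gcount (d - 1) (j - 1) else 0) := by
        refine Finset.sum_congr rfl fun x _ => ?_
        by_cases hx : x = 0
        · simp [hx]
        · simp only [hx, ne_eq, not_false_eq_true, if_true, and_true]
          rw [← hcardx x hx, Finset.card_filter]
    _ = (2 ^ d - 1) * gcount (d - 1) (j - 1) := by
        rw [← Finset.sum_filter, Finset.sum_const, hcardne, smul_eq_mul]

lemma gcount_pos {d j : ℕ} (hjd : j ≤ d) : 0 < gcount d j := by
  have hfin : Finite {D : Submodule (ZMod 2) (Fin d → ZMod 2) // finrank (ZMod 2) D = j} :=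
    Subtype.finite
  refine Nat.card_pos_iff.2 ⟨?_, hfin⟩
  rcases Nat.eq_zero_or_pos j with hj | hj
  · exact ⟨⟨⊥, by rw [hj, finrank_bot]⟩⟩
  · set σ : Fin d → Fin j := fun i => if h : (i : ℕ) < j then ⟨i, h⟩ else ⟨0, hj⟩ with hσ
    have hσs : Function.Surjective σ := by
      intro y
      refine ⟨⟨(y : ℕ), lt_of_lt_of_le y.2 hjd⟩, ?_⟩
      simp [hσ, y.2]
    have hinj := LinearMap.funLeft_injective_of_surjective (ZMod 2) (ZMod 2) σ hσs
    refine ⟨⟨LinearMap.range (LinearMap.funLeft (ZMod 2) (ZMod 2) σ), ?_⟩⟩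
    rw [LinearMap.finrank_range_of_inj hinj, Module.finrank_fin_fun]

section keycount
variable {V : Type*} [AddCommGroup V] [Module (ZMod 2) V] [Finite V]
  [FiniteDimensional (ZMod 2) V]

lemma am_card (p : Submodule (ZMod 2) V) {r s n : ℕ} (hr : finrank (ZMod 2) p = r)
    (hn : finrank (ZMod 2) V = n) (hrs : r ≤ s) :
    Nat.card {C : Submodule (ZMod 2) V // finrank (ZMod 2) C = s ∧ p ≤ C}
      = gcount (n - r) (s - r) := by
  rw [countB p hr hrs]
  have hq : finrank (ZMod 2) (V ⧸ p) = n - r := by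
    have := Submodule.finrank_quotient_add_finrank p
    rw [hr, hn] at this; omega
  exact countA _ _ hq

lemma ncount_le (p : Submodule (ZMod 2) V) {r s n : ℕ} (hr : finrank (ZMod 2) p = r)
    (hn : finrank (ZMod 2) V = n) (hrs : r + 1 ≤ s) (hsn : s ≤ n) (v : V) (hv : v ∉ p) :
    Nat.card {C : Submodule (ZMod 2) V // finrank (ZMod 2) C = s ∧ p ≤ C ∧ v ∈ C} * 2 ^ (n - s)
      ≤ Nat.card {C : Submodule (ZMod 2) V // finrank (ZMod 2) C = s ∧ p ≤ C} := by
  have hv0 : v ≠ 0 := fun h => hv (h ▸ p.zero_mem)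
  have hrn : r ≤ n := hr ▸ hn ▸ Submodule.finrank_le p
  set p' : Submodule (ZMod 2) V := p ⊔ Submodule.span (ZMod 2) {v} with hp'
  have hrp' : finrank (ZMod 2) p' = r + 1 := by
    rw [hp']
    have h1 := Submodule.finrank_sup_add_finrank_inf_eq p (Submodule.span (ZMod 2) {v})
    have h2 : p ⊓ Submodule.span (ZMod 2) {v} = ⊥ :=
      ((Submodule.disjoint_span_singleton' hv0).2 hv).eq_bot
    rw [h2, finrank_bot, finrank_span_singleton hv0, hr] at h1
    omega
  have hcond : ∀ C : Submodule (ZMod 2) V, (p ≤ C ∧ v ∈ C) = (p' ≤ C) := by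
    intro C
    rw [eq_iff_iff, hp', sup_le_iff, Submodule.span_singleton_le_iff_mem]
  have hN : Nat.card {C : Submodule (ZMod 2) V // finrank (ZMod 2) C = s ∧ p ≤ C ∧ v ∈ C}
      = gcount (n - r - 1) (s - r - 1) := by
    simp only [hcond]
    rw [am_card p' hrp' hn hrs]
    have e1 : n - (r + 1) = n - r - 1 := by omega
    have e2 : s - (r + 1) = s - r - 1 := by omega
    rw [e1, e2]
  have hM := am_card p hr hn (by omega : r ≤ s)
  have hdc := countDC (d := n - r) (j := s - r) (by omega) (by omega)
  have hNM : Nat.card {C : Submodule (ZMod 2) V // finrank (ZMod 2) C = s ∧ p ≤ C ∧ v ∈ C}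
      ≤ Nat.card {C : Submodule (ZMod 2) V // finrank (ZMod 2) C = s ∧ p ≤ C} := by
    have hinj : Function.Injective
        (fun C : {C : Submodule (ZMod 2) V // finrank (ZMod 2) C = s ∧ p ≤ C ∧ v ∈ C} =>
          (⟨C.1, C.2.1, C.2.2.1⟩ : {C : Submodule (ZMod 2) V //
            finrank (ZMod 2) C = s ∧ p ≤ C})) := by
      intro C C' h
      apply Subtype.ext
      simpa using congrArg Subtype.val h
    exact Nat.card_le_card_of_injective _ hinj
  set N := Nat.card {C : Submodule (ZMod 2) V // finrank (ZMod 2) C = s ∧ p ≤ C ∧ v ∈ C}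
  set M := Nat.card {C : Submodule (ZMod 2) V // finrank (ZMod 2) C = s ∧ p ≤ C}
  have key : N * 2 ^ (n - r) ≤ M * 2 ^ (s - r) := by
    have h1 : (1:ℕ) ≤ 2 ^ (n - r) := Nat.one_le_two_pow
    have h2 : (1:ℕ) ≤ 2 ^ (s - r) := Nat.one_le_two_pow
    have e1 : N * 2 ^ (n - r) = N * (2 ^ (n - r) - 1) + N := by
      conv_lhs => rw [← Nat.sub_add_cancel h1]
      rw [mul_add, mul_one]
    have e3 : M * 2 ^ (s - r) = M * (2 ^ (s - r) - 1) + M := by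
      conv_lhs => rw [← Nat.sub_add_cancel h2]
      rw [mul_add, mul_one]
    have e2 : N * (2 ^ (n - r) - 1) = M * (2 ^ (s - r) - 1) := by
      rw [hN, hM, mul_comm]
      exact hdc.symm
    omega
  have hsplit : (2:ℕ) ^ (n - r) = 2 ^ (n - s) * 2 ^ (s - r) := by
    rw [← pow_add]; congr 1; omega
  rw [hsplit, ← mul_assoc] at key
  exact Nat.le_of_mul_le_mul_right key (by positivity)

end keycount

open Real in
lemma choose_le_two_rpow_binH {k u : ℕ} (hk : 0 < k) (hu : u ≤ k) :
    (k.choose u : ℝ) ≤ (2 : ℝ) ^ ((k : ℝ) * binH ((u : ℝ) / k)) := by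
  have hk0 : (k : ℝ) ≠ 0 := Nat.cast_ne_zero.2 hk.ne'
  set p : ℝ := (u : ℝ) / k with hp
  rcases Nat.eq_zero_or_pos u with hu0 | hupos
  · subst hu0
    simp only [Nat.choose_zero_right, Nat.cast_one, Nat.cast_zero, zero_div, hp]
    rw [show binH (0:ℝ) = 0 by simp [binH], mul_zero, Real.rpow_zero]
  rcases eq_or_lt_of_le hu with huk | hult
  · subst huk
    simp only [Nat.choose_self, Nat.cast_one, hp]
    rw [show ((u:ℝ))/u = 1 by field_simp, show binH 1 = 0 by simp [binH], mul_zero,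
      Real.rpow_zero]
  -- now 0 < u < k, so 0 < p < 1
  have hp0 : 0 < p := by positivity
  have hp1 : p < 1 := by
    rw [hp, div_lt_one (by positivity)]
    exact_mod_cast hult
  have h1p : 0 < 1 - p := by linarith
  set A : ℝ := p ^ u * (1 - p) ^ (k - u) with hA
  have hApos : 0 < A := by positivity
  -- single term of binomial expansion
  have hLA : (k.choose u : ℝ) * A ≤ 1 := by
    have hbin : ((p + (1 - p)) ^ k : ℝ)
        = ∑ i ∈ Finset.range (k + 1), p ^ i * (1 - p) ^ (k - i) * (k.choose i : ℝ) :=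
      add_pow p (1 - p) k
    have hone : (1 : ℝ) = ∑ i ∈ Finset.range (k + 1), p ^ i * (1 - p) ^ (k - i) * k.choose i := by
      rw [← hbin]; norm_num
    rw [hone]
    have := Finset.single_le_sum
      (f := fun i => p ^ i * (1 - p) ^ (k - i) * (k.choose i : ℝ))
      (fun i _ => by positivity) (Finset.mem_range.2 (by omega : u < k + 1))
    calc (k.choose u : ℝ) * A = p ^ u * (1 - p) ^ (k - u) * (k.choose u : ℝ) := by ring
      _ ≤ _ := this
  -- RHS * A = 1
  have hRA : (2 : ℝ) ^ ((k : ℝ) * binH p) * A = 1 := by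
    have hpu : p ^ u = (2 : ℝ) ^ (Real.logb 2 p * u) := by
      conv_lhs => rw [← Real.rpow_logb (b := 2) (by norm_num) (by norm_num) hp0]
      rw [← Real.rpow_natCast ((2:ℝ) ^ (Real.logb 2 p)) u, ← Real.rpow_mul (by norm_num)]
    have hqu : (1 - p) ^ (k - u) = (2 : ℝ) ^ (Real.logb 2 (1 - p) * ((k : ℝ) - u)) := by
      conv_lhs => rw [← Real.rpow_logb (b := 2) (by norm_num) (by norm_num) h1p]
      rw [← Real.rpow_natCast ((2:ℝ) ^ (Real.logb 2 (1 - p))) (k - u),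
        ← Real.rpow_mul (by norm_num)]
      congr 1
      rw [Nat.cast_sub hu]
    rw [hA, hpu, hqu, ← Real.rpow_add (by norm_num), ← Real.rpow_add (by norm_num)]
    rw [show ((k:ℝ) * binH p + (Real.logb 2 p * u + Real.logb 2 (1 - p) * ((k:ℝ) - u))) = 0 by
      rw [binH]
      have hkp : (k : ℝ) * p = u := by rw [hp]; field_simp
      have hkp' : (k : ℝ) * (1 - p) = (k : ℝ) - u := by rw [mul_sub, hkp, mul_one]
      linear_combination (-(Real.logb 2 p)) * hkp - (Real.logb 2 (1 - p)) * hkp']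
    exact Real.rpow_zero 2
  have := mul_le_mul_of_nonneg_right hLA (le_of_lt (inv_pos.2 hApos))
  calc (k.choose u : ℝ) = (k.choose u : ℝ) * A * A⁻¹ := by field_simp
    _ ≤ 1 * A⁻¹ := this
    _ = (2:ℝ) ^ ((k:ℝ) * binH p) := by
        rw [one_mul]
        field_simp
        linarith [hRA]

section helpers
open Finset

lemma ncard_eq_filter_card {α : Type*} [Fintype α] (s : Set α) [DecidablePred (· ∈ s)] :
    s.ncard = (Finset.univ.filter (· ∈ s)).card := by
  rw [← Nat.card_coe_set_eq, Nat.card_eq_fintype_card, Fintype.card_subtype]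

lemma zmod2_cases (a : ZMod 2) : a = 0 ∨ a = 1 := by
  fin_cases a
  · exact Or.inl rfl
  · exact Or.inr rfl

/-- the number of vectors of weight `u` is at most `k.choose u` -/
lemma weight_card_le {k u : ℕ} :
    (Finset.univ.filter (fun x : Fin k → ZMod 2 => wt x = u)).card ≤ k.choose u := by
  classical
  have h := Finset.card_le_card_of_injOn
    (f := fun x : Fin k → ZMod 2 => (Finset.univ.filter (fun i => x i ≠ 0)))
    (s := Finset.univ.filter (fun x : Fin k → ZMod 2 => wt x = u))
    (t := Finset.univ.powersetCard u)
    (fun x hx => by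
      rw [Finset.mem_coe, Finset.mem_powersetCard_univ]
      have := (Finset.mem_filter.1 hx).2
      rw [wt, hammingNorm] at this
      exact this)
    (fun x _ y _ hxy => by
      have hxy : Finset.univ.filter (fun i => x i ≠ 0)
          = Finset.univ.filter (fun i => y i ≠ 0) := hxy
      funext i
      have hiff : x i ≠ 0 ↔ y i ≠ 0 := by
        constructor <;> intro h0
        · have : i ∈ Finset.univ.filter (fun j => y j ≠ 0) := by
            rw [← hxy]; simp [h0]
          simpa using this
        · have : i ∈ Finset.univ.filter (fun j => x j ≠ 0) := by
            rw [hxy]; simp [h0]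
          simpa using this
      rcases zmod2_cases (x i) with h1 | h1 <;> rcases zmod2_cases (y i) with h2 | h2 <;>
        simp_all)
  calc _ ≤ (Finset.univ.powersetCard u).card := h
    _ = k.choose u := by rw [Finset.card_powersetCard, Finset.card_univ, Fintype.card_fin]

lemma exists_weight {k u : ℕ} (hu : u ≤ k) :
    ∃ x : Fin k → ZMod 2, wt x = u := by
  classical
  obtain ⟨s, -, hs⟩ := Finset.exists_subset_card_eq (s := (Finset.univ : Finset (Fin k))) (n := u)
    (by simpa using hu)
  refine ⟨fun i => if i ∈ s then 1 else 0, ?_⟩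
  rw [wt, hammingNorm, ← hs]
  congr 1
  ext i
  by_cases hi : i ∈ s <;> simp [hi]

/-- vectors are determined by their two halves -/
lemma halves_inj {k : ℕ} {x y : Vec k} (h1 : firstHalf x = firstHalf y)
    (h2 : secondHalf x = secondHalf y) : x = y := by
  funext i
  refine Fin.addCases (fun j => ?_) (fun j => ?_) i
  · exact congrFun h1 j
  · exact congrFun h2 j

lemma typeOf_eq_iff {k u : ℕ} (hk : 0 < k) (x : Fin k → ZMod 2) :
    typeOf x = (u : ℝ) / k ↔ wt x = u := by
  have hk' : (k:ℝ) ≠ 0 := Nat.cast_ne_zero.2 hk.ne'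
  rw [typeOf, div_eq_div_iff hk' hk']
  constructor
  · intro h
    exact_mod_cast mul_right_cancel₀ hk' h
  · intro h; rw [h]

end helpers

lemma hc_typeclass {k w1 w2 : ℕ} {e : Vec k}
    (he : e ∈ typeClass (k := k) ((w1:ℝ)/k) ((w2:ℝ)/k)) :
    Hc e = (binH ((w1:ℝ)/k) + binH ((w2:ℝ)/k)) / 2 := by
  obtain ⟨h1, h2⟩ := he
  rw [Hc, h1, h2]

lemma mem_errSet_iff {k : ℕ} (C1 C : Submodule (ZMod 2) (Vec k)) (e : Vec k) :
    e ∈ errSet C1 C ↔ ∃ v : Vec k, v ∈ C ∧ v ∉ C1 ∧ Hc (e + v) ≤ Hc e := by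
  have hself : ∀ x : Vec k, x + x = 0 := by
    intro x; funext i
    show x i + x i = 0
    exact CharTwo.add_self_eq_zero _
  have hcanc : ∀ x y : Vec k, x + (x + y) = y := by
    intro x y; rw [← add_assoc, hself, zero_add]
  constructor
  · rintro ⟨ehat, hH, hmem, hnmem⟩
    refine ⟨e + ehat, hmem, hnmem, ?_⟩
    rw [hcanc]
    exact hH
  · rintro ⟨v, hv1, hv2, hH⟩
    exact ⟨e + v, hH, by rw [hcanc]; exact ⟨hv1, hv2⟩⟩

lemma wt_le {k : ℕ} (x : Fin k → ZMod 2) : wt x ≤ k := by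
  calc wt x ≤ Finset.univ.card := by unfold wt hammingNorm; exact Finset.card_filter_le _ _
    _ = k := by simp

open Finset in
lemma badcount {k : ℕ} (hk : 0 < k) (h : ℝ) :
    ((Finset.univ.filter (fun x : Vec k => Hc x ≤ h)).card : ℝ)
      ≤ ((k:ℝ) + 1) ^ 2 * (2:ℝ) ^ (((k:ℝ) + k) * h) := by
  classical
  set S := Finset.univ.filter (fun x : Vec k => Hc x ≤ h) with hS
  have hfib := Finset.card_eq_sum_card_fiberwise
    (f := fun x : Vec k => (wt (firstHalf x), wt (secondHalf x)))
    (s := S) (t := (Finset.range (k+1)) ×ˢ (Finset.range (k+1)))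
    (fun x _ => by
      simp only [Finset.mem_coe, Finset.mem_product, Finset.mem_range]
      exact ⟨Nat.lt_succ_of_le (wt_le _), Nat.lt_succ_of_le (wt_le _)⟩)
  have hterm : ∀ p ∈ (Finset.range (k+1)) ×ˢ (Finset.range (k+1)),
      ((S.filter (fun x => (wt (firstHalf x), wt (secondHalf x)) = p)).card : ℝ)
        ≤ (2:ℝ) ^ (((k:ℝ) + k) * h) := by
    rintro ⟨u1, u2⟩ hp
    simp only [Finset.mem_product, Finset.mem_range, Nat.lt_succ_iff] at hp
    obtain ⟨hu1, hu2⟩ := hp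
    set fib := S.filter (fun x => (wt (firstHalf x), wt (secondHalf x)) = (u1, u2)) with hfibdef
    rcases Finset.eq_empty_or_nonempty fib with hemp | ⟨x0, hx0⟩
    · rw [hemp]
      simp only [Finset.card_empty, Nat.cast_zero]
      positivity
    · -- the entropy condition holds
      have hx0' := Finset.mem_filter.1 hx0
      have hx0S := Finset.mem_filter.1 hx0'.1
      have hw : wt (firstHalf x0) = u1 ∧ wt (secondHalf x0) = u2 := by
        have := hx0'.2
        exact ⟨congrArg Prod.fst this, congrArg Prod.snd this⟩
      have hHcx0 : Hc x0 = (binH ((u1:ℝ)/k) + binH ((u2:ℝ)/k)) / 2 := by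
        rw [Hc, (typeOf_eq_iff hk (firstHalf x0)).2 hw.1,
          (typeOf_eq_iff hk (secondHalf x0)).2 hw.2]
      have hent : (binH ((u1:ℝ)/k) + binH ((u2:ℝ)/k)) / 2 ≤ h := by
        rw [← hHcx0]; exact hx0S.2
      -- cardinality of the fiber
      have hcard : fib.card ≤ (Finset.univ.filter (fun y : Fin k → ZMod 2 => wt y = u1)).card
          * (Finset.univ.filter (fun y : Fin k → ZMod 2 => wt y = u2)).card := by
        have := Finset.card_le_card_of_injOn
          (f := fun x : Vec k => (firstHalf x, secondHalf x))
          (s := fib)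
          (t := (Finset.univ.filter (fun y : Fin k → ZMod 2 => wt y = u1))
            ×ˢ (Finset.univ.filter (fun y : Fin k → ZMod 2 => wt y = u2)))
          (fun x hx => by
            have hx' := (Finset.mem_filter.1 hx).2
            have h1 : wt (firstHalf x) = u1 := congrArg Prod.fst hx'
            have h2 : wt (secondHalf x) = u2 := congrArg Prod.snd hx'
            simp only [Finset.mem_coe, Finset.mem_product, Finset.mem_filter, Finset.mem_univ, true_and]
            exact ⟨h1, h2⟩)
          (fun x _ y _ hxy => by
            have hxy : (firstHalf x, secondHalf x) = (firstHalf y, secondHalf y) := hxy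
            exact halves_inj (congrArg Prod.fst hxy) (congrArg Prod.snd hxy))
        calc fib.card ≤ _ := this
          _ = _ := Finset.card_product _ _
      calc (fib.card : ℝ)
          ≤ ((k.choose u1 : ℝ)) * (k.choose u2 : ℝ) := by
            have := hcard
            have h1 := weight_card_le (k := k) (u := u1)
            have h2 := weight_card_le (k := k) (u := u2)
            calc (fib.card : ℝ) ≤ ((Finset.univ.filter (fun y : Fin k → ZMod 2 => wt y = u1)).card
                  * (Finset.univ.filter (fun y : Fin k → ZMod 2 => wt y = u2)).card : ℕ) := by
                  exact_mod_cast this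
              _ ≤ _ := by
                  push_cast
                  exact mul_le_mul (by exact_mod_cast h1) (by exact_mod_cast h2)
                    (by positivity) (by positivity)
        _ ≤ (2:ℝ) ^ ((k:ℝ) * binH ((u1:ℝ)/k)) * (2:ℝ) ^ ((k:ℝ) * binH ((u2:ℝ)/k)) :=
            mul_le_mul (choose_le_two_rpow_binH hk hu1) (choose_le_two_rpow_binH hk hu2)
              (by positivity) (by positivity)
        _ = (2:ℝ) ^ (((k:ℝ) + k) * ((binH ((u1:ℝ)/k) + binH ((u2:ℝ)/k)) / 2)) := by
            rw [← Real.rpow_add (by norm_num)]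
            congr 1
            ring
        _ ≤ (2:ℝ) ^ (((k:ℝ) + k) * h) := by
            apply Real.rpow_le_rpow_of_exponent_le (by norm_num)
            have hkk : (0:ℝ) ≤ (k:ℝ) + k := by positivity
            exact mul_le_mul_of_nonneg_left hent hkk
  calc (S.card : ℝ) = ∑ p ∈ (Finset.range (k+1)) ×ˢ (Finset.range (k+1)),
        ((S.filter (fun x => (wt (firstHalf x), wt (secondHalf x)) = p)).card : ℝ) := by
        rw [hfib]; push_cast; rfl
    _ ≤ ∑ _p ∈ (Finset.range (k+1)) ×ˢ (Finset.range (k+1)), (2:ℝ) ^ (((k:ℝ) + k) * h) :=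
        Finset.sum_le_sum hterm
    _ = ((k:ℝ) + 1) ^ 2 * (2:ℝ) ^ (((k:ℝ) + k) * h) := by
        rw [Finset.sum_const, Finset.card_product, Finset.card_range, nsmul_eq_mul]
        push_cast
        ring

/-- for every type pair `(a,b) = (w₁/(n/2), w₂/(n/2))`, the average over
`C₂⊥ ∈ A_m` of `|𝓔(C₂⊥) ∩ T_{(a,b)}^n| / |T_{(a,b)}^n|` is at most
`(n/2+1)²·2^{−n·|1−R−H_c(a,b)|⁺}`. -/
theorem stmt7 {k r m : ℕ} (hk : 0 < k) (C1perp : Submodule (ZMod 2) (Vec k))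
    (hr : Module.finrank (ZMod 2) C1perp = r) (hm : 1 ≤ m) (hrm : r + m ≤ k + k)
    (R : ℝ) (hR : R = ((r : ℝ) + m) / ((k : ℝ) + k))
    (w1 w2 : ℕ) (hw1 : w1 ≤ k) (hw2 : w2 ≤ k) :
    (1 / ((Am C1perp (r + m)).ncard : ℝ)) *
      ∑ᶠ C ∈ Am C1perp (r + m),
        ((errSet C1perp C ∩ typeClass ((w1 : ℝ) / k) ((w2 : ℝ) / k)).ncard : ℝ) /
          ((typeClass (k := k) ((w1 : ℝ) / k) ((w2 : ℝ) / k)).ncard : ℝ)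
      ≤ ((k : ℝ) + 1) ^ 2 *
          (2 : ℝ) ^ (-(((k : ℝ) + k) *
            max (1 - R - (binH ((w1 : ℝ) / k) + binH ((w2 : ℝ) / k)) / 2) 0)) := by
  classical
  letI : Fintype (Submodule (ZMod 2) (Vec k)) := Fintype.ofFinite _
  set a : ℝ := (w1 : ℝ) / k with ha
  set b : ℝ := (w2 : ℝ) / k with hb
  set h : ℝ := (binH a + binH b) / 2 with hh
  set AF : Finset (Submodule (ZMod 2) (Vec k)) :=
    Finset.univ.filter (fun C => C ∈ Am C1perp (r + m)) with hAF
  set TF : Finset (Vec k) := Finset.univ.filter (· ∈ typeClass (k := k) a b) with hTF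
  have hVrank : Module.finrank (ZMod 2) (Vec k) = k + k := Module.finrank_fin_fun _
  have hAmcoe : Am C1perp (r + m) = ↑AF := by
    ext C; simp [hAF]
  -- cardinality of AF
  have hMnat : AF.card = Nat.card {C : Submodule (ZMod 2) (Vec k) //
      Module.finrank (ZMod 2) C = r + m ∧ C1perp ≤ C} := by
    rw [hAF, ← Fintype.card_subtype, Nat.card_eq_fintype_card]
    exact Fintype.card_congr (Equiv.subtypeEquivRight (fun C => Iff.rfl))
  have hMpos : 0 < AF.card := by
    rw [hMnat, am_card C1perp hr hVrank (by omega)]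
    exact gcount_pos (by omega)
  -- cardinality of TF
  have hTC : (typeClass (k := k) a b).ncard = TF.card := by
    rw [hTF, ncard_eq_filter_card]
  have hTpos : 0 < TF.card := by
    obtain ⟨x1, hx1⟩ := exists_weight (k := k) hw1
    obtain ⟨x2, hx2⟩ := exists_weight (k := k) hw2
    refine Finset.card_pos.2 ⟨Fin.append x1 x2, ?_⟩
    rw [hTF, Finset.mem_filter]
    refine ⟨Finset.mem_univ _, ?_, ?_⟩
    · rw [ha]
      apply (typeOf_eq_iff hk _).2
      rw [show firstHalf (Fin.append x1 x2) = x1 from funext fun i => Fin.append_left x1 x2 i]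
      exact hx1
    · rw [hb]
      apply (typeOf_eq_iff hk _).2
      rw [show secondHalf (Fin.append x1 x2) = x2 from funext fun i => Fin.append_right x1 x2 i]
      exact hx2
  -- bad sets
  set Bad : Vec k → Finset (Vec k) := fun e =>
    Finset.univ.filter (fun v => v ∉ C1perp ∧ Hc (e + v) ≤ Hc e) with hBad
  -- counting submodules containing a fixed bad vector
  have hNcnt : ∀ v : Vec k, v ∉ C1perp →
      (AF.filter (fun C => v ∈ C)).card * 2 ^ ((k + k) - (r + m)) ≤ AF.card := by
    intro v hv
    have h1 : (AF.filter (fun C => v ∈ C)).card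
        = Nat.card {C : Submodule (ZMod 2) (Vec k) //
            Module.finrank (ZMod 2) C = r + m ∧ C1perp ≤ C ∧ v ∈ C} := by
      rw [hAF, Finset.filter_filter, ← Fintype.card_subtype, Nat.card_eq_fintype_card]
      refine Fintype.card_congr (Equiv.subtypeEquivRight (fun C => ?_))
      show (C ∈ Am C1perp (r + m)) ∧ v ∈ C ↔ _
      rw [Am]
      simp only [Set.mem_setOf_eq]
      tauto
    rw [h1, hMnat]
    exact ncount_le C1perp hr hVrank (by omega) hrm v hv
  -- per-subspace bound via bad vectors
  have hstep1 : ∀ C ∈ AF,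
      (errSet C1perp C ∩ typeClass (k := k) a b).ncard
        ≤ ∑ e ∈ TF, ((Bad e).filter (fun v => v ∈ C)).card := by
    intro C _
    have he1 : (errSet C1perp C ∩ typeClass (k := k) a b).ncard
        = (Finset.univ.filter (· ∈ errSet C1perp C ∩ typeClass (k := k) a b)).card :=
      ncard_eq_filter_card _
    have he2 : Finset.univ.filter (· ∈ errSet C1perp C ∩ typeClass (k := k) a b)
        ⊆ TF.filter (· ∈ errSet C1perp C) := by
      intro x hx
      simp only [Finset.mem_filter, Finset.mem_univ, true_and, Set.mem_inter_iff] at hx ⊢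
      exact ⟨by rw [hTF]; simp only [Finset.mem_filter, Finset.mem_univ, true_and]; exact hx.2,
        hx.1⟩
    calc (errSet C1perp C ∩ typeClass (k := k) a b).ncard
        ≤ (TF.filter (· ∈ errSet C1perp C)).card := he1 ▸ Finset.card_le_card he2
      _ = ∑ e ∈ TF, if e ∈ errSet C1perp C then 1 else 0 := Finset.card_filter _ _
      _ ≤ ∑ e ∈ TF, ((Bad e).filter (fun v => v ∈ C)).card := by
          refine Finset.sum_le_sum (fun e _ => ?_)
          by_cases hmem : e ∈ errSet C1perp C
          · simp only [hmem, if_true]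
            obtain ⟨v, hv1, hv2, hv3⟩ := (mem_errSet_iff C1perp C e).1 hmem
            refine Finset.card_pos.2 ⟨v, ?_⟩
            rw [hBad]
            simp only [Finset.mem_filter, Finset.mem_univ, true_and]
            exact ⟨⟨hv2, hv3⟩, hv1⟩
          · simp [hmem]
  -- the main natural-number inequality
  have key : (∑ C ∈ AF, (errSet C1perp C ∩ typeClass (k := k) a b).ncard)
      * 2 ^ ((k + k) - (r + m))
      ≤ (∑ e ∈ TF, (Bad e).card) * AF.card := by
    calc (∑ C ∈ AF, (errSet C1perp C ∩ typeClass (k := k) a b).ncard)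
        * 2 ^ ((k + k) - (r + m))
        ≤ (∑ C ∈ AF, ∑ e ∈ TF, ((Bad e).filter (fun v => v ∈ C)).card)
            * 2 ^ ((k + k) - (r + m)) :=
          Nat.mul_le_mul_right _ (Finset.sum_le_sum hstep1)
      _ = (∑ e ∈ TF, ∑ v ∈ Bad e, (AF.filter (fun C => v ∈ C)).card)
            * 2 ^ ((k + k) - (r + m)) := by
          congr 1
          rw [Finset.sum_comm]
          refine Finset.sum_congr rfl (fun e _ => ?_)
          calc ∑ C ∈ AF, ((Bad e).filter (fun v => v ∈ C)).card
              = ∑ C ∈ AF, ∑ v ∈ Bad e, (if v ∈ C then 1 else 0) :=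
                Finset.sum_congr rfl (fun C _ => Finset.card_filter _ _)
            _ = ∑ v ∈ Bad e, ∑ C ∈ AF, (if v ∈ C then 1 else 0) := Finset.sum_comm
            _ = ∑ v ∈ Bad e, (AF.filter (fun C => v ∈ C)).card :=
                Finset.sum_congr rfl (fun v _ => (Finset.card_filter _ _).symm)
      _ = ∑ e ∈ TF, ∑ v ∈ Bad e, (AF.filter (fun C => v ∈ C)).card
            * 2 ^ ((k + k) - (r + m)) := by
          rw [Finset.sum_mul]
          exact Finset.sum_congr rfl (fun e _ => Finset.sum_mul _ _ _)
      _ ≤ ∑ e ∈ TF, ∑ v ∈ Bad e, AF.card := by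
          refine Finset.sum_le_sum (fun e _ => Finset.sum_le_sum (fun v hv => ?_))
          have hv' : v ∉ C1perp := by
            rw [hBad] at hv
            simp only [Finset.mem_filter, Finset.mem_univ, true_and] at hv
            exact hv.1
          exact hNcnt v hv'
      _ = (∑ e ∈ TF, (Bad e).card) * AF.card := by
          rw [Finset.sum_mul]
          exact Finset.sum_congr rfl (fun e _ => by rw [Finset.sum_const, smul_eq_mul])
  -- real bound on bad set sizes
  have hBadR : ∀ e ∈ TF, ((Bad e).card : ℝ) ≤ ((k:ℝ) + 1) ^ 2 * (2:ℝ) ^ (((k:ℝ) + k) * h) := by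
    intro e heTF
    have heT : e ∈ typeClass (k := k) a b := by
      rw [hTF] at heTF
      simpa using heTF
    have hHce : Hc e = h := by rw [hh, ha, hb]; exact hc_typeclass heT
    have hsub : (Bad e).card ≤ (Finset.univ.filter (fun x : Vec k => Hc x ≤ h)).card := by
      refine Finset.card_le_card_of_injOn (fun v => e + v) (fun v hv => ?_) ?_
      · rw [hBad] at hv
        simp only [Finset.mem_coe, Finset.mem_filter, Finset.mem_univ, true_and] at hv ⊢
        rw [← hHce]
        exact hv.2
      · intro v _ v' _ hvv'
        exact add_left_cancel hvv'
    calc ((Bad e).card : ℝ)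
        ≤ ((Finset.univ.filter (fun x : Vec k => Hc x ≤ h)).card : ℝ) := by exact_mod_cast hsub
      _ ≤ _ := badcount hk h
  -- pass to the reals
  set M' : ℝ := (AF.card : ℝ) with hM'
  set T' : ℝ := (TF.card : ℝ) with hT'
  have hM'pos : 0 < M' := by rw [hM']; exact_mod_cast hMpos
  have hT'pos : 0 < T' := by rw [hT']; exact_mod_cast hTpos
  set SN : ℕ := ∑ C ∈ AF, (errSet C1perp C ∩ typeClass (k := k) a b).ncard with hSN
  -- rewrite the goal
  rw [hAmcoe, finsum_mem_coe_finset, Set.ncard_coe_finset, hTC]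
  have hgoalL : (1 / M') * ∑ C ∈ AF,
      ((errSet C1perp C ∩ typeClass (k := k) a b).ncard : ℝ) / T' = (SN : ℝ) / (M' * T') := by
    rw [← Finset.sum_div, hSN]
    push_cast
    field_simp
  rw [hgoalL]
  -- two bounds on SN/(M'*T')
  have hD : (0:ℝ) < ((2:ℕ) ^ ((k + k) - (r + m)) : ℝ) := by positivity
  have hkkpos : (0:ℝ) < (k:ℝ) + k := by positivity
  have hnR : ((k:ℝ) + k) * R = (r:ℝ) + m := by
    rw [hR]; field_simp
  rcases le_or_gt (1 - R - h) 0 with hc | hc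
  · -- trivial bound
    rw [max_eq_right hc, mul_zero, neg_zero, Real.rpow_zero, mul_one]
    have hSN1 : (SN : ℝ) ≤ M' * T' := by
      have : SN ≤ AF.card * TF.card := by
        rw [hSN]
        calc ∑ C ∈ AF, (errSet C1perp C ∩ typeClass (k := k) a b).ncard
            ≤ ∑ C ∈ AF, TF.card := by
              refine Finset.sum_le_sum (fun C _ => ?_)
              rw [← hTC]
              exact Set.ncard_le_ncard Set.inter_subset_right (Set.toFinite _)
          _ = AF.card * TF.card := by rw [Finset.sum_const, smul_eq_mul]
      rw [hM', hT']
      exact_mod_cast this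
    have h1 : (SN : ℝ) / (M' * T') ≤ 1 := by
      rw [div_le_one (mul_pos hM'pos hT'pos)]
      exact hSN1
    have hk1 : (1:ℝ) ≤ (k:ℝ) + 1 := le_add_of_nonneg_left (Nat.cast_nonneg k)
    have h2 : (1:ℝ) ≤ ((k:ℝ) + 1) ^ 2 := by
      calc (1:ℝ) = 1 * 1 := by ring
        _ ≤ ((k:ℝ) + 1) * ((k:ℝ) + 1) := mul_le_mul hk1 hk1 one_pos.le (by positivity)
        _ = ((k:ℝ) + 1) ^ 2 := (sq ((k:ℝ) + 1)).symm
    exact h1.trans h2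
  · -- main bound
    rw [max_eq_left hc.le]
    have hkey : (SN : ℝ) * ((2:ℕ) ^ ((k + k) - (r + m)) : ℝ)
        ≤ (T' * (((k:ℝ) + 1) ^ 2 * (2:ℝ) ^ (((k:ℝ) + k) * h))) * M' := by
      have hkeyR : (SN : ℝ) * ((2:ℕ) ^ ((k + k) - (r + m)) : ℝ)
          ≤ ((∑ e ∈ TF, (Bad e).card : ℕ) : ℝ) * M' := by
        rw [hM']
        exact_mod_cast key
      refine hkeyR.trans ?_
      refine mul_le_mul_of_nonneg_right ?_ hM'pos.le
      calc ((∑ e ∈ TF, (Bad e).card : ℕ) : ℝ)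
          = ∑ e ∈ TF, ((Bad e).card : ℝ) := by push_cast; rfl
        _ ≤ ∑ e ∈ TF, ((k:ℝ) + 1) ^ 2 * (2:ℝ) ^ (((k:ℝ) + k) * h) :=
            Finset.sum_le_sum hBadR
        _ = T' * (((k:ℝ) + 1) ^ 2 * (2:ℝ) ^ (((k:ℝ) + k) * h)) := by
            rw [Finset.sum_const, nsmul_eq_mul, hT']
    have hmain : (SN : ℝ) / (M' * T')
        ≤ (((k:ℝ) + 1) ^ 2 * (2:ℝ) ^ (((k:ℝ) + k) * h)) / ((2:ℕ) ^ ((k + k) - (r + m)) : ℝ) := by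
      rw [div_le_div_iff₀ (mul_pos hM'pos hT'pos) hD]
      calc (SN : ℝ) * ((2:ℕ) ^ ((k + k) - (r + m)) : ℝ)
          ≤ (T' * (((k:ℝ) + 1) ^ 2 * (2:ℝ) ^ (((k:ℝ) + k) * h))) * M' := hkey
        _ = ((k:ℝ) + 1) ^ 2 * (2:ℝ) ^ (((k:ℝ) + k) * h) * (M' * T') := by ring
    refine hmain.trans ?_
    have hDrw : ((2:ℕ) ^ ((k + k) - (r + m)) : ℝ)
        = (2:ℝ) ^ ((((k:ℝ) + k) - ((r:ℝ) + m))) := by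
      push_cast
      rw [← Real.rpow_natCast 2 ((k + k) - (r + m))]
      congr 1
      rw [Nat.cast_sub hrm]
      push_cast
      ring
    rw [hDrw, div_eq_mul_inv, mul_assoc, ← Real.rpow_neg (by norm_num : (0:ℝ) ≤ 2),
      ← Real.rpow_add (by norm_num : (0:ℝ) < 2)]
    apply mul_le_mul_of_nonneg_left _ (by positivity)
    apply Real.rpow_le_rpow_of_exponent_le (by norm_num)
    have : ((k:ℝ) + k) * (1 - R - h) = ((k:ℝ) + k) - (((r:ℝ)) + m) - ((k:ℝ) + k) * h := by
      rw [mul_sub, mul_sub, mul_one, hnR]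
    rw [this]
    exact le_of_eq (by ring)
end

section
/- Let μ > 0 and suppose C₂⊥ ∈ A_m satisfies: for every type pair (a,b), |𝓔(C₂⊥) ∩ T_{(a,b)}^n| / |T_{(a,b)}^n| ≤ (n/2+1)² · 2^{−n(|1 − R − H_c(a,b)|⁺ − μ)}. Then for all p₀′, p₁′ ∈ (0,1): P_err(C₂⊥, p₀′, p₁′) ≤ (n/2+1)⁴ · 2^{−n(E(R,p₀′,p₁′) − μ)}. -/
open Real Set

section Aux

lemma core {k w : ℕ} (hw : w ≤ k) {q : ℝ} (h0 : 0 ≤ q) (h1 : q ≤ 1) :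
    (k.choose w : ℝ) * (q ^ w * (1 - q) ^ (k - w)) ≤ 1 := by
  have h1q : (0:ℝ) ≤ 1 - q := by linarith
  have h := (add_pow q (1 - q) k).symm
  rw [add_sub_cancel, one_pow] at h
  calc (k.choose w : ℝ) * (q ^ w * (1 - q) ^ (k - w))
      = q ^ w * (1-q) ^ (k-w) * (k.choose w : ℝ) := by ring
    _ ≤ ∑ j ∈ Finset.range (k+1), q ^ j * (1-q) ^ (k-j) * (k.choose j : ℝ) :=
        Finset.single_le_sum (f := fun j => q ^ j * (1-q) ^ (k-j) * (k.choose j : ℝ))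
          (fun j _ => by positivity)
          (Finset.mem_range.mpr (Nat.lt_succ_of_le hw))
    _ = 1 := h

lemma rpow_logb_pow {x : ℝ} (hx : 0 < x) (n : ℕ) :
    (2:ℝ) ^ ((n:ℝ) * Real.logb 2 x) = x ^ n := by
  rw [mul_comm, Real.rpow_mul (by norm_num), Real.rpow_logb two_pos (by norm_num) hx,
    Real.rpow_natCast]

lemma binD_zero (p : ℝ) : binD 0 p = -Real.logb 2 (1 - p) := by
  simp [binD, Real.logb_div one_ne_zero]

lemma binD_one (p : ℝ) : binD 1 p = -Real.logb 2 p := by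
  simp [binD, Real.logb_div one_ne_zero]

lemma binH_zero : binH 0 = 0 := by simp [binH]
lemma binH_one : binH 1 = 0 := by simp [binH]

lemma binD_neg {k : ℝ} {q p : ℝ} (hq0 : 0 < q) (hq1 : q < 1) (hp0 : 0 < p) (hp1 : p < 1)
    {w kw : ℝ} (hkq : k * q = w) (hkq' : k * (1 - q) = kw) :
    -(k * binD q p) = w * Real.logb 2 (p/q) + kw * Real.logb 2 ((1-p)/(1-q)) := by
  rw [binD, ← hkq, ← hkq',
    Real.logb_div (ne_of_gt hq0) (ne_of_gt hp0),
    Real.logb_div (by linarith : (1:ℝ)-q ≠ 0) (by linarith : (1:ℝ)-p ≠ 0),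
    Real.logb_div (ne_of_gt hp0) (ne_of_gt hq0),
    Real.logb_div (by linarith : (1:ℝ)-p ≠ 0) (by linarith : (1:ℝ)-q ≠ 0)]
  ring

lemma lem1_mid {k w : ℕ} {p q : ℝ} (hp0 : 0 < p) (hp1 : p < 1) (hq0 : 0 < q)
    (hq1 : q < 1) (hw : w ≤ k) (hkq : (k:ℝ) * q = w) (hkq' : (k:ℝ) * (1-q) = ((k-w:ℕ):ℝ)) :
    (k.choose w : ℝ) * (p ^ w * (1 - p) ^ (k - w)) ≤ (2:ℝ) ^ (-((k:ℝ) * binD q p)) := by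
  have h1p : (0:ℝ) < 1 - p := by linarith
  have h1q : (0:ℝ) < 1 - q := by linarith
  have key : (2:ℝ) ^ (-((k:ℝ) * binD q p)) = (p/q) ^ w * ((1-p)/(1-q)) ^ (k-w) := by
    rw [binD_neg hq0 hq1 hp0 hp1 hkq hkq', Real.rpow_add two_pos,
      rpow_logb_pow (by positivity), rpow_logb_pow (by positivity)]
  rw [key, div_pow, div_pow, div_mul_div_comm,
    le_div_iff₀ (by positivity : (0:ℝ) < q ^ w * (1-q) ^ (k-w))]
  have hc := core hw hq0.le hq1.le
  nlinarith [mul_pos (pow_pos hp0 w) (pow_pos h1p (k-w)),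
    mul_nonneg (pow_pos hq0 w).le (pow_pos h1q (k-w)).le]

lemma lem2_mid {k w : ℕ} {q : ℝ} (hq0 : 0 < q) (hq1 : q < 1) (hw : w ≤ k)
    (hkq : (k:ℝ) * q = w) (hkq' : (k:ℝ) * (1-q) = ((k-w:ℕ):ℝ)) :
    (k.choose w : ℝ) ≤ (2:ℝ) ^ ((k:ℝ) * binH q) := by
  have h1q : (0:ℝ) < 1 - q := by linarith
  have key : (2:ℝ) ^ ((k:ℝ) * binH q) = ((q:ℝ) ^ w * (1-q) ^ (k-w))⁻¹ := by
    have e1 : (k:ℝ) * binH q =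
        (w:ℝ) * Real.logb 2 q⁻¹ + ((k-w:ℕ):ℝ) * Real.logb 2 (1-q)⁻¹ := by
      rw [binH, ← hkq, ← hkq', Real.logb_inv, Real.logb_inv]; ring
    rw [e1, Real.rpow_add two_pos, rpow_logb_pow (by positivity),
      rpow_logb_pow (by positivity), inv_pow, inv_pow, ← mul_inv]
  rw [key, ← one_div, le_div_iff₀ (by positivity)]
  exact core hw hq0.le hq1.le

lemma halfq {k w : ℕ} (hk : 0 < k) (hw : w ≤ k) :
    (k:ℝ) * ((w:ℝ)/k) = w ∧ (k:ℝ) * (1 - (w:ℝ)/k) = ((k-w:ℕ):ℝ) := by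
  have hkR : (0:ℝ) < k := by exact_mod_cast hk
  constructor
  · field_simp
  · push_cast [Nat.cast_sub hw]; field_simp

lemma lem1 {k w : ℕ} (hk : 0 < k) (hw : w ≤ k) {p : ℝ} (hp0 : 0 < p) (hp1 : p < 1) :
    (k.choose w : ℝ) * (p ^ w * (1 - p) ^ (k - w)) ≤
      (2:ℝ) ^ (-((k:ℝ) * binD ((w:ℝ)/k) p)) := by
  have hkR : (0:ℝ) < k := by exact_mod_cast hk
  have h1p : (0:ℝ) < 1 - p := by linarith
  rcases Nat.eq_zero_or_pos w with h0 | h0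
  · subst h0
    simp only [Nat.cast_zero, zero_div, binD_zero, Nat.choose_zero_right, Nat.cast_one,
      pow_zero, one_mul, Nat.sub_zero, mul_neg, neg_neg, rpow_logb_pow h1p]
    exact le_rfl
  rcases eq_or_lt_of_le hw with hk' | hk'
  · subst hk'
    rw [div_self (ne_of_gt hkR), binD_one, Nat.choose_self, Nat.sub_self]
    simp only [Nat.cast_one, pow_zero, one_mul, mul_one, mul_neg, neg_neg, rpow_logb_pow hp0]
    exact le_rfl
  · obtain ⟨e1, e2⟩ := halfq hk hw
    exact lem1_mid hp0 hp1 (by positivity) (by rw [div_lt_one hkR]; exact_mod_cast hk')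
      hw e1 e2

lemma lem2 {k w : ℕ} (hk : 0 < k) (hw : w ≤ k) :
    (k.choose w : ℝ) ≤ (2:ℝ) ^ ((k:ℝ) * binH ((w:ℝ)/k)) := by
  have hkR : (0:ℝ) < k := by exact_mod_cast hk
  rcases Nat.eq_zero_or_pos w with h0 | h0
  · subst h0; simp [binH_zero]
  rcases eq_or_lt_of_le hw with hk' | hk'
  · subst hk'; rw [div_self (ne_of_gt hkR), binH_one]; simp
  · obtain ⟨e1, e2⟩ := halfq hk hw
    exact lem2_mid (by positivity) (by rw [div_lt_one hkR]; exact_mod_cast hk') hw e1 e2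

lemma binD_nonneg {q p : ℝ} (hq0 : 0 ≤ q) (hq1 : q ≤ 1) (hp0 : 0 < p) (hp1 : p < 1) :
    0 ≤ binD q p := by
  have h1p : (0:ℝ) < 1 - p := by linarith
  rcases eq_or_lt_of_le hq0 with h | h
  · rw [← h, binD_zero, neg_nonneg]
    exact Real.logb_nonpos one_lt_two h1p.le (by linarith)
  rcases eq_or_lt_of_le hq1 with h' | h'
  · rw [h', binD_one, neg_nonneg]
    exact Real.logb_nonpos one_lt_two hp0.le hp1.le
  · have h1q : (0:ℝ) < 1 - q := by linarith
    have l1 : Real.log (p/q) ≤ p/q - 1 := Real.log_le_sub_one_of_pos (by positivity)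
    have l2 : Real.log ((1-p)/(1-q)) ≤ (1-p)/(1-q) - 1 :=
      Real.log_le_sub_one_of_pos (by positivity)
    have e1 : Real.log (q/p) = -Real.log (p/q) := by
      rw [← Real.log_inv]; congr 1; field_simp
    have e2 : Real.log ((1-q)/(1-p)) = -Real.log ((1-p)/(1-q)) := by
      rw [← Real.log_inv]; congr 1; field_simp
    have key : 0 ≤ q * Real.log (q/p) + (1-q) * Real.log ((1-q)/(1-p)) := by
      rw [e1, e2]
      have b1 : q * (p/q - 1) = p - q := by field_simp
      have b2 : (1-q) * ((1-p)/(1-q) - 1) = q - p := by field_simp; ring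
      nlinarith [mul_le_mul_of_nonneg_left l1 h.le, mul_le_mul_of_nonneg_left l2 h1q.le]
    have hlog2 : (0:ℝ) < Real.log 2 := Real.log_pos one_lt_two
    have e3 : binD q p =
        (q * Real.log (q/p) + (1-q) * Real.log ((1-q)/(1-p))) / Real.log 2 := by
      rw [binD, Real.logb, Real.logb]; ring
    rw [e3]
    exact div_nonneg key hlog2.le

lemma Eexp_le {R p0 p1 : ℝ} (hp00 : 0 < p0) (hp01 : p0 < 1) (hp10 : 0 < p1) (hp11 : p1 < 1)
    {q0 q1 : ℝ} (hq0 : q0 ∈ Set.Icc (0:ℝ) 1) (hq1 : q1 ∈ Set.Icc (0:ℝ) 1) :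
    Eexp R p0 p1 ≤
      (binD q1 p1 + binD q0 p0) / 2 + max (1 - R - (binH q0 + binH q1) / 2) 0 := by
  apply csInf_le
  · refine ⟨0, fun v hv => ?_⟩
    obtain ⟨a, ha, b, hb, rfl⟩ := hv
    have h1 := binD_nonneg ha.1 ha.2 hp00 hp01
    have h2 := binD_nonneg hb.1 hb.2 hp10 hp11
    have h3 : (0:ℝ) ≤ max (1 - R - (binH a + binH b) / 2) 0 := le_max_right _ _
    linarith
  · exact ⟨q0, hq0, q1, hq1, rfl⟩

lemma cardWt (k w : ℕ) :
    (Finset.univ.filter (fun x : Fin k → ZMod 2 => hammingNorm x = w)).card = k.choose w := by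
  rw [← (by simp [Finset.card_powersetCard] :
      (Finset.powersetCard w (Finset.univ : Finset (Fin k))).card = k.choose w)]
  apply Finset.card_bij' (fun x _ => Finset.univ.filter (fun i => x i ≠ 0))
    (fun s _ => fun i => if i ∈ s then (1 : ZMod 2) else 0) ?hi ?hj ?left ?right
  case hi =>
    intro x hx
    simp only [Finset.mem_filter, Finset.mem_univ, true_and] at hx
    simpa [Finset.mem_powersetCard, hammingNorm] using hx
  case hj =>
    intro s hs
    simp only [Finset.mem_powersetCard, Finset.mem_univ] at hs
    simp only [Finset.mem_filter, Finset.mem_univ, true_and, hammingNorm]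
    rw [← hs.2]; congr 1
    ext i; simp
  case left =>
    intro x _
    funext i
    have h2 : ∀ a : ZMod 2, a = 0 ∨ a = 1 := by decide
    by_cases h : x i = 0 <;> simp [h]
    · exact ((h2 (x i)).resolve_left h).symm
  case right =>
    intro s _
    ext i; simp

lemma append_halves (k : ℕ) (e : Fin (k+k) → ZMod 2) :
    Fin.append (fun i => e (Fin.castAdd k i)) (fun i => e (Fin.natAdd k i)) = e := by
  funext i
  refine Fin.addCases (fun i => ?_) (fun i => ?_) i <;>
    simp only [Fin.append_left, Fin.append_right]


lemma cardT (k w1 w2 : ℕ) :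
    (Finset.univ.filter (fun e : Vec k =>
        wt (firstHalf e) = w1 ∧ wt (secondHalf e) = w2)).card =
      k.choose w1 * k.choose w2 := by
  classical
  rw [← cardWt k w1, ← cardWt k w2, ← Finset.card_product]
  apply Finset.card_bij' (fun e _ => (firstHalf e, secondHalf e))
    (fun p _ => Fin.append p.1 p.2) ?hi ?hj ?left ?right
  case hi =>
    intro e he
    simp only [Finset.mem_filter, Finset.mem_univ, true_and] at he
    simp only [Finset.mem_product, Finset.mem_filter, Finset.mem_univ, true_and]
    exact ⟨he.1, he.2⟩
  case hj =>
    intro p hp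
    simp only [Finset.mem_product, Finset.mem_filter, Finset.mem_univ, true_and] at hp
    simp only [Finset.mem_filter, Finset.mem_univ, true_and]
    have e1 : firstHalf (Fin.append p.1 p.2) = p.1 := by
      funext i; exact Fin.append_left p.1 p.2 i
    have e2 : secondHalf (Fin.append p.1 p.2) = p.2 := by
      funext i; exact Fin.append_right p.1 p.2 i
    rw [e1, e2]; exact ⟨hp.1, hp.2⟩
  case left =>
    intro e _
    exact append_halves k e
  case right =>
    rintro ⟨x, y⟩ _
    have e1 : firstHalf (Fin.append x y) = x := by
      funext i; exact Fin.append_left x y i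
    have e2 : secondHalf (Fin.append x y) = y := by
      funext i; exact Fin.append_right x y i
    simp only [e1, e2]

lemma pair_bound {k w1 w2 : ℕ} (hk : 0 < k) (hw1 : w1 ≤ k) (hw2 : w2 ≤ k)
    {p0' p1' : ℝ} (h00 : 0 < p0') (h01 : p0' < 1) (h10 : 0 < p1') (h11 : p1' < 1) :
    ((k.choose w1 * k.choose w2 : ℕ) : ℝ) *
        (p1' ^ w1 * (1 - p1') ^ (k - w1) * (p0' ^ w2 * (1 - p0') ^ (k - w2))) ≤
      (2:ℝ) ^ (-(((k:ℝ) + k) *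
        ((binD ((w1:ℝ)/k) p1' + binD ((w2:ℝ)/k) p0') / 2))) := by
  have A := lem1 hk hw1 h10 h11
  have B := lem1 hk hw2 h00 h01
  have hB0 : (0:ℝ) ≤ (k.choose w2 : ℝ) * (p0' ^ w2 * (1 - p0') ^ (k - w2)) :=
    mul_nonneg (Nat.cast_nonneg _) (mul_nonneg (pow_nonneg h00.le _)
      (pow_nonneg (by linarith) _))
  calc ((k.choose w1 * k.choose w2 : ℕ) : ℝ) *
        (p1' ^ w1 * (1 - p1') ^ (k - w1) * (p0' ^ w2 * (1 - p0') ^ (k - w2)))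
      = ((k.choose w1 : ℝ) * (p1' ^ w1 * (1 - p1') ^ (k - w1))) *
        ((k.choose w2 : ℝ) * (p0' ^ w2 * (1 - p0') ^ (k - w2))) := by push_cast; ring
    _ ≤ (2:ℝ) ^ (-((k:ℝ) * binD ((w1:ℝ)/k) p1')) *
        (2:ℝ) ^ (-((k:ℝ) * binD ((w2:ℝ)/k) p0')) := by
        apply mul_le_mul A B hB0 (Real.rpow_nonneg (by norm_num) _)
    _ = (2:ℝ) ^ (-(((k:ℝ) + k) *
        ((binD ((w1:ℝ)/k) p1' + binD ((w2:ℝ)/k) p0') / 2))) := by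
        rw [← Real.rpow_add two_pos]; congr 1; ring

end Aux

set_option maxHeartbeats 1000000 in
/-- if `C₂⊥ ∈ A_m` satisfies the per-type-class bound with slack `μ`,
then `P_err(C₂⊥,p₀′,p₁′) ≤ (n/2+1)⁴·2^{−n(E(R,p₀′,p₁′)−μ)}` for all `p₀′,p₁′ ∈ (0,1)`. -/
theorem stmt9 {k r m : ℕ} (hk : 0 < k) (C1perp : Submodule (ZMod 2) (Vec k))
    (hr : Module.finrank (ZMod 2) C1perp = r) (hm : 1 ≤ m) (hrm : r + m ≤ k + k)
    (R : ℝ) (hR : R = ((r : ℝ) + m) / ((k : ℝ) + k)) (μ : ℝ) (hμ : 0 < μ)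
    (C2perp : Submodule (ZMod 2) (Vec k)) (hC2 : C2perp ∈ Am C1perp (r + m))
    (hgood : ∀ w1 ≤ k, ∀ w2 ≤ k,
      ((errSet C1perp C2perp ∩ typeClass ((w1 : ℝ) / k) ((w2 : ℝ) / k)).ncard : ℝ) /
          ((typeClass (k := k) ((w1 : ℝ) / k) ((w2 : ℝ) / k)).ncard : ℝ) ≤
        ((k : ℝ) + 1) ^ 2 *
          (2 : ℝ) ^ (-(((k : ℝ) + k) *
            (max (1 - R - (binH ((w1 : ℝ) / k) + binH ((w2 : ℝ) / k)) / 2) 0 - μ)))) :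
    ∀ p0' p1' : ℝ, 0 < p0' → p0' < 1 → 0 < p1' → p1' < 1 →
      Perr C1perp C2perp p0' p1' ≤
        ((k : ℝ) + 1) ^ 4 * (2 : ℝ) ^ (-(((k : ℝ) + k) * (Eexp R p0' p1' - μ))) := by
  classical
  intro p0' p1' h00 h01 h10 h11
  have hkR : (0:ℝ) < k := by exact_mod_cast hk
  have hkne : (k:ℝ) ≠ 0 := ne_of_gt hkR
  set E := Eexp R p0' p1' with hE
  set t : Finset (ℕ × ℕ) := Finset.range (k+1) ×ˢ Finset.range (k+1) with ht
  set g : Vec k → ℕ × ℕ := fun e => (wt (firstHalf e), wt (secondHalf e)) with hg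
  have hwt_le : ∀ (x : Fin k → ZMod 2), wt x ≤ k := fun x => by
    have := Finset.card_filter_le (Finset.univ : Finset (Fin k)) (fun i => x i ≠ 0)
    simpa [wt, hammingNorm] using this
  have hmaps : ∀ e ∈ (Finset.univ : Finset (Vec k)), g e ∈ t := fun e _ => by
    simp only [ht, hg, Finset.mem_product, Finset.mem_range, Nat.lt_succ_iff]
    exact ⟨hwt_le _, hwt_le _⟩
  have hsplit : Perr C1perp C2perp p0' p1' =
      ∑ p ∈ t, ∑ e ∈ Finset.univ.filter (fun e => g e = p),
        (if e ∈ errSet C1perp C2perp then bscProb p1' p0' e else 0) := by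
    rw [Perr, ← Finset.sum_fiberwise_of_maps_to hmaps]
  have hfiber : ∀ p ∈ t,
      (∑ e ∈ Finset.univ.filter (fun e => g e = p),
        (if e ∈ errSet C1perp C2perp then bscProb p1' p0' e else 0)) ≤
      ((k:ℝ) + 1) ^ 2 * (2:ℝ) ^ (-(((k:ℝ) + k) * (E - μ))) := by
    rintro ⟨w1, w2⟩ hp
    simp only [ht, Finset.mem_product, Finset.mem_range, Nat.lt_succ_iff] at hp
    obtain ⟨hw1, hw2⟩ := hp
    set F := (Finset.univ.filter (fun e => g e = (w1, w2))).filter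
      (fun e => e ∈ errSet C1perp C2perp) with hF
    set Qv : ℝ := p1' ^ w1 * (1 - p1') ^ (k - w1) * (p0' ^ w2 * (1 - p0') ^ (k - w2)) with hQv
    have hQv0 : 0 ≤ Qv := by
      rw [hQv]
      have i1 : (0:ℝ) ≤ 1 - p1' := by linarith
      have i2 : (0:ℝ) ≤ 1 - p0' := by linarith
      positivity
    have hsum : (∑ e ∈ Finset.univ.filter (fun e => g e = (w1, w2)),
        (if e ∈ errSet C1perp C2perp then bscProb p1' p0' e else 0)) = (F.card : ℝ) * Qv := by
      rw [← Finset.sum_filter, ← hF]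
      rw [Finset.sum_congr rfl (fun e he => ?_), Finset.sum_const, nsmul_eq_mul]
      have he' : g e = (w1, w2) := by
        rw [hF, Finset.mem_filter, Finset.mem_filter] at he
        exact he.1.2
      have h1 : wt (firstHalf e) = w1 := congrArg Prod.fst he'
      have h2 : wt (secondHalf e) = w2 := congrArg Prod.snd he'
      rw [bscProb, h1, h2, ← hQv]
    have hdiv : ∀ a b : ℕ, a ≤ k → ((a:ℝ)/k = (b:ℝ)/k ↔ a = b) := by
      intro a b _
      constructor
      · intro h
        have h2 : (a:ℝ) = b := by
          field_simp at h
          exact_mod_cast h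
        exact_mod_cast h2
      · intro h; rw [h]
    have hNF : ((errSet C1perp C2perp ∩
        typeClass ((w1:ℝ)/k) ((w2:ℝ)/k) : Set (Vec k)).ncard : ℝ) = (F.card : ℝ) := by
      congr 1
      rw [Set.ncard_eq_toFinset_card']
      congr 1
      ext e
      rw [Set.mem_toFinset]
      simp only [Set.mem_toFinset, Set.mem_inter_iff, Set.mem_setOf_eq, typeClass,
        hF, Finset.mem_filter, Finset.mem_univ, true_and, hg, Prod.mk.injEq, typeOf]
      rw [hdiv _ _ (hwt_le _), hdiv _ _ (hwt_le _)]
      tauto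
    have hTc : ((typeClass ((w1:ℝ)/k) ((w2:ℝ)/k) : Set (Vec k)).ncard : ℝ) =
        ((k.choose w1 * k.choose w2 : ℕ) : ℝ) := by
      congr 1
      rw [Set.ncard_eq_toFinset_card', ← cardT k w1 w2]
      congr 1
      ext e
      rw [Set.mem_toFinset]
      simp only [Set.mem_toFinset, Set.mem_setOf_eq, typeClass, Finset.mem_filter,
        Finset.mem_univ, true_and, typeOf]
      rw [hdiv _ _ (hwt_le _), hdiv _ _ (hwt_le _)]
    have hTpos : (0:ℝ) < ((k.choose w1 * k.choose w2 : ℕ) : ℝ) := by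
      have c1 := Nat.choose_pos hw1
      have c2 := Nat.choose_pos hw2
      have : 0 < k.choose w1 * k.choose w2 := Nat.mul_pos c1 c2
      exact_mod_cast this
    set B : ℝ := ((k:ℝ) + 1) ^ 2 * (2:ℝ) ^ (-(((k:ℝ) + k) *
      (max (1 - R - (binH ((w1:ℝ)/k) + binH ((w2:ℝ)/k)) / 2) 0 - μ))) with hB
    have hgood' := hgood w1 hw1 w2 hw2
    rw [hNF, hTc, ← hB] at hgood'
    have hNle : (F.card : ℝ) ≤ B * ((k.choose w1 * k.choose w2 : ℕ) : ℝ) :=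
      (div_le_iff₀ hTpos).mp hgood'
    have hB0 : 0 ≤ B := by
      rw [hB]; positivity
    have step1 : (F.card : ℝ) * Qv ≤ B * (((k.choose w1 * k.choose w2 : ℕ) : ℝ) * Qv) :=
      (mul_le_mul_of_nonneg_right hNle hQv0).trans_eq
        (mul_assoc B ((k.choose w1 * k.choose w2 : ℕ) : ℝ) Qv)
    have step2 : ((k.choose w1 * k.choose w2 : ℕ) : ℝ) * Qv ≤
        (2:ℝ) ^ (-(((k:ℝ) + k) * ((binD ((w1:ℝ)/k) p1' + binD ((w2:ℝ)/k) p0') / 2))) := by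
      rw [hQv]
      exact pair_bound hk hw1 hw2 h00 h01 h10 h11
    have step3 : B * (2:ℝ) ^ (-(((k:ℝ) + k) *
        ((binD ((w1:ℝ)/k) p1' + binD ((w2:ℝ)/k) p0') / 2))) ≤
        ((k:ℝ) + 1) ^ 2 * (2:ℝ) ^ (-(((k:ℝ) + k) * (E - μ))) := by
      rw [hB, mul_assoc, ← Real.rpow_add two_pos]
      apply mul_le_mul_of_nonneg_left _ (by positivity)
      apply (Real.rpow_le_rpow_left_iff (by norm_num : (1:ℝ) < 2)).mpr
      have hle : E ≤ (binD ((w1:ℝ)/k) p1' + binD ((w2:ℝ)/k) p0') / 2 +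
          max (1 - R - (binH ((w2:ℝ)/k) + binH ((w1:ℝ)/k)) / 2) 0 := by
        rw [hE]
        exact Eexp_le h00 h01 h10 h11
          ⟨by positivity, by rw [div_le_one hkR]; exact_mod_cast hw2⟩
          ⟨by positivity, by rw [div_le_one hkR]; exact_mod_cast hw1⟩
      have hmm : max (1 - R - (binH ((w2:ℝ)/k) + binH ((w1:ℝ)/k)) / 2) 0 =
          max (1 - R - (binH ((w1:ℝ)/k) + binH ((w2:ℝ)/k)) / 2) 0 := by
        rw [add_comm (binH ((w2:ℝ)/k))]
      rw [hmm] at hle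
      have hkk : (0:ℝ) ≤ (k:ℝ) + k := by positivity
      nlinarith [hle, hkk]
    calc (∑ e ∈ Finset.univ.filter (fun e => g e = (w1, w2)),
        (if e ∈ errSet C1perp C2perp then bscProb p1' p0' e else 0))
        = (F.card : ℝ) * Qv := hsum
      _ ≤ B * (((k.choose w1 * k.choose w2 : ℕ) : ℝ) * Qv) := step1
      _ ≤ B * (2:ℝ) ^ (-(((k:ℝ) + k) *
          ((binD ((w1:ℝ)/k) p1' + binD ((w2:ℝ)/k) p0') / 2))) :=
          mul_le_mul_of_nonneg_left step2 hB0
      _ ≤ ((k:ℝ) + 1) ^ 2 * (2:ℝ) ^ (-(((k:ℝ) + k) * (E - μ))) := step3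
  calc Perr C1perp C2perp p0' p1'
      = ∑ p ∈ t, ∑ e ∈ Finset.univ.filter (fun e => g e = p),
        (if e ∈ errSet C1perp C2perp then bscProb p1' p0' e else 0) := hsplit
    _ ≤ ∑ _p ∈ t, ((k:ℝ) + 1) ^ 2 * (2:ℝ) ^ (-(((k:ℝ) + k) * (E - μ))) :=
        Finset.sum_le_sum hfiber
    _ = (t.card : ℝ) * (((k:ℝ) + 1) ^ 2 * (2:ℝ) ^ (-(((k:ℝ) + k) * (E - μ)))) := by
        rw [Finset.sum_const, nsmul_eq_mul]
    _ = ((k:ℝ) + 1) ^ 4 * (2:ℝ) ^ (-(((k:ℝ) + k) * (E - μ))) := by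
        rw [ht, Finset.card_product, Finset.card_range]
        push_cast
        ring
end
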